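/- arXiv:1001.1776 — 5 statements merged into one kernel-verified Lean document; each statement's English description precedes it below -/
import Mathlib

section
/- The bilinear map m₃(f,g) = (ℰf)·ḡ − (ℰg)·f̄ is a 2-cocycle of the bosonic Poisson algebra on D = C_c^∞(ℝ^n) with coefficients in the adjoint representation: for all f, g, h ∈ D, {f, m₃(g,h)} + {g, m₃(h,f)} + {h, m₃(f,g)} + m₃(f, {g,h}) + m₃(g, {h,f}) + m₃(h, {f,g}) = 0. -/
open MeasureTheory Finset

noncomputable section

/-- The constant Poisson bracket `{f,g}(x) = ∑_{A,B} ∂_A f(x) ω^{AB} ∂_B g(x)`. -/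
def pbr {n : ℕ} (ω : Matrix (Fin n) (Fin n) ℝ) (f g : (Fin n → ℝ) → ℝ) :
    (Fin n → ℝ) → ℝ :=
  fun x => ∑ A : Fin n, ∑ B : Fin n,
    fderiv ℝ f x (Pi.single A 1) * ω A B * fderiv ℝ g x (Pi.single B 1)

/-- Membership in `D = C_c^∞(ℝ^n)`: smooth with compact support. -/
def IsCcSmooth {n : ℕ} (f : (Fin n → ℝ) → ℝ) : Prop :=
  ContDiff ℝ (⊤ : ℕ∞) f ∧ HasCompactSupport f

/-- `f̄ = ∫_{ℝ^n} f(x) dx`. -/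
def intR {n : ℕ} (f : (Fin n → ℝ) → ℝ) : ℝ := ∫ x, f x

/-- The operator `ℰ f = f - (1/2) ∑_A x_A ∂_A f`. -/
def eulerE {n : ℕ} (f : (Fin n → ℝ) → ℝ) : (Fin n → ℝ) → ℝ :=
  fun x => f x - (1/2) * ∑ A : Fin n, x A * fderiv ℝ f x (Pi.single A 1)

/-- The 2-cochain `m₃(f,g) = (ℰf)·ḡ - (ℰg)·f̄`. -/
def m3 {n : ℕ} (f g : (Fin n → ℝ) → ℝ) : (Fin n → ℝ) → ℝ :=
  fun x => eulerE f x * intR g - eulerE g x * intR f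

/-- The 2-cochain `m_ζ(f,g) = {ζ,f}·ḡ - {ζ,g}·f̄`. -/
def mzeta {n : ℕ} (ω : Matrix (Fin n) (Fin n) ℝ) (ζ f g : (Fin n → ℝ) → ℝ) :
    (Fin n → ℝ) → ℝ :=
  fun x => pbr ω ζ f x * intR g - pbr ω ζ g x * intR f

namespace M3Aux

variable {n : ℕ}

/-- Partial derivative in direction `A`. -/
def pd (f : (Fin n → ℝ) → ℝ) (A : Fin n) : (Fin n → ℝ) → ℝ :=
  fun x => fderiv ℝ f x (Pi.single A 1)

/-- Second partial derivative, outer direction `A`, inner direction `B`. -/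
def d2 (f : (Fin n → ℝ) → ℝ) (A B : Fin n) : (Fin n → ℝ) → ℝ :=
  fun x => fderiv ℝ (fderiv ℝ f) x (Pi.single A 1) (Pi.single B 1)

lemma one_le_inf : (1 : WithTop ℕ∞) ≤ ((⊤:ℕ∞) : WithTop ℕ∞) := by norm_cast
lemma two_le_inf : (2 : WithTop ℕ∞) ≤ ((⊤:ℕ∞) : WithTop ℕ∞) := by norm_cast

variable {f g h u v : (Fin n → ℝ) → ℝ} {ω : Matrix (Fin n) (Fin n) ℝ}

lemma pbr_eq (x : Fin n → ℝ) :
    pbr ω u v x = ∑ C : Fin n, ∑ D : Fin n, pd u C x * ω C D * pd v D x := rfl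

lemma eulerE_eq (x : Fin n → ℝ) :
    eulerE u x = u x - (1/2) * ∑ A : Fin n, x A * pd u A x := rfl

lemma fderiv_smooth (hf : ContDiff ℝ ((⊤:ℕ∞) : WithTop ℕ∞) f) : ContDiff ℝ ((⊤:ℕ∞) : WithTop ℕ∞) (fderiv ℝ f) :=
  hf.fderiv_right (by simp)

lemma pd_smooth (hf : ContDiff ℝ ((⊤:ℕ∞) : WithTop ℕ∞) f) (A : Fin n) : ContDiff ℝ ((⊤:ℕ∞) : WithTop ℕ∞) (pd f A) :=
  (fderiv_smooth hf).clm_apply contDiff_const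

lemma diff (hf : ContDiff ℝ ((⊤:ℕ∞) : WithTop ℕ∞) f) : Differentiable ℝ f := hf.differentiable (by simp)

lemma pd_diff (hf : ContDiff ℝ ((⊤:ℕ∞) : WithTop ℕ∞) f) (A : Fin n) : Differentiable ℝ (pd f A) :=
  (pd_smooth hf A).differentiable (by simp)

lemma d2_smooth (hf : ContDiff ℝ ((⊤:ℕ∞) : WithTop ℕ∞) f) (A B : Fin n) : ContDiff ℝ ((⊤:ℕ∞) : WithTop ℕ∞) (d2 f A B) :=
  (((fderiv_smooth hf).fderiv_right (by simp)).clm_apply contDiff_const).clm_apply contDiff_const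

lemma pd_cs (hf : HasCompactSupport f) (A : Fin n) : HasCompactSupport (pd f A) :=
  hf.fderiv_apply _ _

lemma d2_cs (hf : HasCompactSupport f) (A B : Fin n) : HasCompactSupport (d2 f A B) :=
  ((hf.fderiv ℝ).fderiv ℝ).comp_left
    (g := fun L : (Fin n → ℝ) →L[ℝ] (Fin n → ℝ) →L[ℝ] ℝ => L (Pi.single A 1) (Pi.single B 1)) rfl

/-- Derivative of a partial derivative. -/
lemma fderiv_pd (hf : ContDiff ℝ ((⊤:ℕ∞) : WithTop ℕ∞) f) (B : Fin n) (x v) :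
    fderiv ℝ (pd f B) x v = fderiv ℝ (fderiv ℝ f) x v (Pi.single B 1) := by
  have hd : DifferentiableAt ℝ (fderiv ℝ f) x :=
    ((fderiv_smooth hf).differentiable (by simp)).differentiableAt
  rw [show pd f B = fun y => (fderiv ℝ f y) (Pi.single B 1) from rfl,
    fderiv_clm_apply hd (differentiableAt_const _)]
  simp

lemma pd_pd (hf : ContDiff ℝ ((⊤:ℕ∞) : WithTop ℕ∞) f) (A B : Fin n) (x) :
    pd (pd f B) A x = d2 f A B x := fderiv_pd hf B x _

/-- Clairaut / Schwarz. -/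
lemma d2_symm (hf : ContDiff ℝ ((⊤:ℕ∞) : WithTop ℕ∞) f) (A B : Fin n) (x) :
    d2 f A B x = d2 f B A x :=
  (hf.contDiffAt.isSymmSndFDerivAt (by rw [minSmoothness_of_isRCLikeNormedField]; exact two_le_inf)).eq _ _

lemma pd_proj (A C : Fin n) (x : Fin n → ℝ) :
    fderiv ℝ (fun y : Fin n → ℝ => y A) x (Pi.single C 1) = if A = C then 1 else 0 := by
  rw [show (fun y : Fin n → ℝ => y A)
      = ⇑(ContinuousLinearMap.proj (R := ℝ) (φ := fun _ : Fin n => ℝ) A) from rfl,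
    ContinuousLinearMap.fderiv]
  simp [Pi.single_apply]

/-- Derivative of the Euler operator. -/
lemma pd_eulerE (hf : ContDiff ℝ ((⊤:ℕ∞) : WithTop ℕ∞) f) (C : Fin n) (x) :
    pd (eulerE f) C x
      = pd f C x - (1/2) * (pd f C x + ∑ A : Fin n, x A * d2 f C A x) := by
  have hproj : ∀ A : Fin n, Differentiable ℝ (fun y : Fin n → ℝ => y A) := fun A =>
    (ContinuousLinearMap.proj (R := ℝ) (φ := fun _ : Fin n => ℝ) A).differentiable
  have hterm : ∀ A : Fin n, DifferentiableAt ℝ (fun y : Fin n → ℝ => y A * pd f A y) x :=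
    fun A => ((hproj A).differentiableAt).mul ((pd_diff hf A).differentiableAt)
  have hsum : DifferentiableAt ℝ (fun y : Fin n → ℝ => ∑ A : Fin n, y A * pd f A y) x :=
    DifferentiableAt.fun_sum fun A _ => hterm A
  have step1 : pd (eulerE f) C x
      = pd f C x - (1/2) * ∑ A : Fin n, fderiv ℝ (fun y : Fin n → ℝ => y A * pd f A y) x
          (Pi.single C 1) := by
    show fderiv ℝ (fun y => f y - (1/2) * ∑ A : Fin n, y A * pd f A y) x (Pi.single C 1) = _
    rw [fderiv_fun_sub (diff hf).differentiableAt (hsum.const_mul _)]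
    rw [fderiv_const_mul hsum]
    rw [fderiv_fun_sum fun A _ => hterm A]
    simp [pd]
  rw [step1]
  have step2 : ∀ A : Fin n,
      fderiv ℝ (fun y : Fin n → ℝ => y A * pd f A y) x (Pi.single C 1)
        = x A * d2 f C A x + pd f A x * (if A = C then 1 else 0) := by
    intro A
    rw [fderiv_fun_mul ((hproj A).differentiableAt) ((pd_diff hf A).differentiableAt)]
    simp only [ContinuousLinearMap.add_apply, ContinuousLinearMap.coe_smul',
      Pi.smul_apply, smul_eq_mul]
    rw [fderiv_pd hf, pd_proj]
    rfl
  simp only [step2]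
  rw [Finset.sum_add_distrib]
  have : ∑ A : Fin n, pd f A x * (if A = C then 1 else 0) = pd f C x := by
    rw [Finset.sum_eq_single C]
    · simp
    · intro b _ hb; simp [hb]
    · simp
  rw [this]
  ring

/-- Derivative of the Poisson bracket. -/
lemma pd_pbr (hg : ContDiff ℝ ((⊤:ℕ∞) : WithTop ℕ∞) g) (hh : ContDiff ℝ ((⊤:ℕ∞) : WithTop ℕ∞) h) (E : Fin n) (x) :
    pd (pbr ω g h) E x
      = ∑ C : Fin n, ∑ D : Fin n,
          (d2 g E C x * ω C D * pd h D x + pd g C x * ω C D * d2 h E D x) := by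
  have hterm : ∀ C D : Fin n,
      DifferentiableAt ℝ (fun y => pd g C y * ω C D * pd h D y) x := fun C D =>
    (((pd_diff hg C).differentiableAt).mul_const _).mul ((pd_diff hh D).differentiableAt)
  have hinner : ∀ C : Fin n,
      DifferentiableAt ℝ (fun y => ∑ D : Fin n, pd g C y * ω C D * pd h D y) x := fun C =>
    DifferentiableAt.fun_sum fun D _ => hterm C D
  have step1 : pd (pbr ω g h) E x
      = ∑ C : Fin n, ∑ D : Fin n,
          fderiv ℝ (fun y => pd g C y * ω C D * pd h D y) x (Pi.single E 1) := by
    show fderiv ℝ (fun y => ∑ C : Fin n, ∑ D : Fin n, pd g C y * ω C D * pd h D y) x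
        (Pi.single E 1) = _
    rw [fderiv_fun_sum fun C _ => hinner C]
    rw [ContinuousLinearMap.sum_apply]
    refine Finset.sum_congr rfl fun C _ => ?_
    rw [fderiv_fun_sum fun D _ => hterm C D, ContinuousLinearMap.sum_apply]
  rw [step1]
  refine Finset.sum_congr rfl fun C _ => Finset.sum_congr rfl fun D _ => ?_
  rw [fderiv_fun_mul (((pd_diff hg C).differentiableAt).mul_const _)
      ((pd_diff hh D).differentiableAt)]
  simp only [ContinuousLinearMap.add_apply, ContinuousLinearMap.coe_smul',
    Pi.smul_apply, smul_eq_mul]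
  rw [fderiv_pd hh, fderiv_mul_const ((pd_diff hg C).differentiableAt)]
  simp only [ContinuousLinearMap.coe_smul', Pi.smul_apply, smul_eq_mul]
  rw [fderiv_pd hg]
  show _ * (d2 h E D x) + _ * (_ * d2 g E C x) = _
  ring

lemma sum_rot (F : Fin n → Fin n → Fin n → ℝ) :
    ∑ A : Fin n, ∑ C : Fin n, ∑ D : Fin n, F A C D
      = ∑ C : Fin n, ∑ D : Fin n, ∑ A : Fin n, F A C D := by
  rw [Finset.sum_comm]
  exact Finset.sum_congr rfl fun C _ => Finset.sum_comm

/-- The purely algebraic rearrangement. -/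
lemma algebra_key (x G H : Fin n → ℝ) (G2 H2 : Fin n → Fin n → ℝ)
    (w : Fin n → Fin n → ℝ) :
    (∑ C : Fin n, ∑ D : Fin n, G C * w C D * H D)
        - (1/2) * ∑ A : Fin n, x A * (∑ C : Fin n, ∑ D : Fin n,
            (G2 A C * w C D * H D + G C * w C D * H2 A D))
      = (∑ C : Fin n, ∑ D : Fin n,
            (G C - (1/2) * (G C + ∑ A : Fin n, x A * G2 A C)) * w C D * H D)
        + ∑ C : Fin n, ∑ D : Fin n,
            G C * w C D * (H D - (1/2) * (H D + ∑ A : Fin n, x A * H2 A D)) := by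
  have hL : ∑ A : Fin n, x A * (∑ C : Fin n, ∑ D : Fin n,
        (G2 A C * w C D * H D + G C * w C D * H2 A D))
      = ∑ C : Fin n, ∑ D : Fin n,
          ((∑ A : Fin n, x A * G2 A C) * (w C D * H D)
            + (G C * w C D) * (∑ A : Fin n, x A * H2 A D)) := by
    calc ∑ A : Fin n, x A * (∑ C : Fin n, ∑ D : Fin n,
            (G2 A C * w C D * H D + G C * w C D * H2 A D))
        = ∑ A : Fin n, ∑ C : Fin n, ∑ D : Fin n,
            (x A * G2 A C * (w C D * H D) + (G C * w C D) * (x A * H2 A D)) := by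
          refine Finset.sum_congr rfl fun A _ => ?_
          rw [Finset.mul_sum]
          refine Finset.sum_congr rfl fun C _ => ?_
          rw [Finset.mul_sum]
          exact Finset.sum_congr rfl fun D _ => by ring
      _ = ∑ C : Fin n, ∑ D : Fin n, ∑ A : Fin n,
            (x A * G2 A C * (w C D * H D) + (G C * w C D) * (x A * H2 A D)) := sum_rot _
      _ = _ := by
          refine Finset.sum_congr rfl fun C _ => Finset.sum_congr rfl fun D _ => ?_
          rw [Finset.sum_add_distrib, ← Finset.sum_mul, ← Finset.mul_sum]
  rw [hL, Finset.mul_sum, ← Finset.sum_sub_distrib, ← Finset.sum_add_distrib]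
  refine Finset.sum_congr rfl fun C _ => ?_
  rw [Finset.mul_sum, ← Finset.sum_sub_distrib, ← Finset.sum_add_distrib]
  exact Finset.sum_congr rfl fun D _ => by ring

/-- The Euler operator is a derivation relative to the bracket. -/
lemma eulerE_pbr (hg : ContDiff ℝ ((⊤:ℕ∞) : WithTop ℕ∞) g) (hh : ContDiff ℝ ((⊤:ℕ∞) : WithTop ℕ∞) h) (x) :
    eulerE (pbr ω g h) x = pbr ω (eulerE g) h x + pbr ω g (eulerE h) x := by
  rw [eulerE_eq, pbr_eq, pbr_eq, pbr_eq]
  have h1 : ∀ A : Fin n, x A * pd (pbr ω g h) A x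
      = x A * (∑ C : Fin n, ∑ D : Fin n,
          (d2 g A C x * ω C D * pd h D x + pd g C x * ω C D * d2 h A D x)) := by
    intro A; rw [pd_pbr hg hh]
  simp only [h1]
  have h2 : ∀ C : Fin n, pd (eulerE g) C x
      = pd g C x - (1/2) * (pd g C x + ∑ A : Fin n, x A * d2 g A C x) := by
    intro C
    rw [pd_eulerE hg]
    have hs : ∑ A : Fin n, x A * d2 g C A x = ∑ A : Fin n, x A * d2 g A C x :=
      Finset.sum_congr rfl fun A _ => by rw [d2_symm hg]
    rw [hs]
  have h3 : ∀ D : Fin n, pd (eulerE h) D x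
      = pd h D x - (1/2) * (pd h D x + ∑ A : Fin n, x A * d2 h A D x) := by
    intro D
    rw [pd_eulerE hh]
    have hs : ∑ A : Fin n, x A * d2 h D A x = ∑ A : Fin n, x A * d2 h A D x :=
      Finset.sum_congr rfl fun A _ => by rw [d2_symm hh]
    rw [hs]
  simp only [h2, h3]
  exact algebra_key x (fun C => pd g C x) (fun D => pd h D x)
    (fun A C => d2 g A C x) (fun A D => d2 h A D x) (fun C D => ω C D)

/-- Antisymmetry of the bracket. -/
lemma pbr_anti (hω : ω.transpose = -ω) (a b : (Fin n → ℝ) → ℝ) (x) :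
    pbr ω a b x = - pbr ω b a x := by
  rw [pbr_eq, pbr_eq]
  have hω' : ∀ A B : Fin n, ω B A = - ω A B := by
    intro A B
    have := congrFun (congrFun hω A) B
    simpa [Matrix.transpose_apply] using this
  calc ∑ C : Fin n, ∑ D : Fin n, pd a C x * ω C D * pd b D x
      = ∑ D : Fin n, ∑ C : Fin n, pd a C x * ω C D * pd b D x := Finset.sum_comm
    _ = ∑ C : Fin n, ∑ D : Fin n, -(pd b C x * ω C D * pd a D x) := by
        refine Finset.sum_congr rfl fun D _ => Finset.sum_congr rfl fun C _ => ?_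
        rw [hω' D C]; ring
    _ = - ∑ C : Fin n, ∑ D : Fin n, pd b C x * ω C D * pd a D x := by
        rw [← Finset.sum_neg_distrib]
        exact Finset.sum_congr rfl fun C _ => by rw [Finset.sum_neg_distrib]

/-- Bilinearity of the bracket in combos appearing in `m3`. -/
lemma pbr_comb (hf : ContDiff ℝ ((⊤:ℕ∞) : WithTop ℕ∞) f) (hu : ContDiff ℝ ((⊤:ℕ∞) : WithTop ℕ∞) u) (hv : ContDiff ℝ ((⊤:ℕ∞) : WithTop ℕ∞) v)
    (c c' : ℝ) (x) :
    pbr ω f (fun y => u y * c - v y * c') x = c * pbr ω f u x - c' * pbr ω f v x := by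
  rw [pbr_eq, pbr_eq, pbr_eq]
  have key : ∀ D : Fin n, pd (fun y => u y * c - v y * c') D x
      = c * pd u D x - c' * pd v D x := by
    intro D
    show fderiv ℝ (fun y => u y * c - v y * c') x (Pi.single D 1) = _
    rw [fderiv_fun_sub ((diff hu).differentiableAt.mul_const c)
      ((diff hv).differentiableAt.mul_const c')]
    rw [ContinuousLinearMap.sub_apply, fderiv_mul_const (diff hu).differentiableAt,
      fderiv_mul_const (diff hv).differentiableAt]
    simp only [ContinuousLinearMap.coe_smul', Pi.smul_apply, smul_eq_mul]
    show c * pd u D x - c' * pd v D x = _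
    ring
  simp only [key]
  rw [Finset.mul_sum, Finset.mul_sum, ← Finset.sum_sub_distrib]
  refine Finset.sum_congr rfl fun C _ => ?_
  rw [Finset.mul_sum, Finset.mul_sum, ← Finset.sum_sub_distrib]
  exact Finset.sum_congr rfl fun D _ => by ring

lemma eulerE_smooth (hf : ContDiff ℝ ((⊤:ℕ∞) : WithTop ℕ∞) f) : ContDiff ℝ ((⊤:ℕ∞) : WithTop ℕ∞) (eulerE f) := by
  have : ContDiff ℝ ((⊤:ℕ∞) : WithTop ℕ∞) (fun x : Fin n → ℝ => ∑ A : Fin n, x A * pd f A x) :=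
    ContDiff.sum fun A _ =>
      ((ContinuousLinearMap.proj (R := ℝ) (φ := fun _ : Fin n => ℝ) A).contDiff).mul
        (pd_smooth hf A)
  exact hf.sub (contDiff_const.mul this)

/-- The integral of a bracket of compactly supported functions vanishes. -/
lemma intR_pbr (hω : ω.transpose = -ω)
    (hg : ContDiff ℝ ((⊤:ℕ∞) : WithTop ℕ∞) g) (hgc : HasCompactSupport g)
    (hh : ContDiff ℝ ((⊤:ℕ∞) : WithTop ℕ∞) h) (hhc : HasCompactSupport h) :
    intR (pbr ω g h) = 0 := by
  have hint : ∀ A B : Fin n, Integrable (fun x => pd g A x * ω A B * pd h B x) := by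
    intro A B
    refine Continuous.integrable_of_hasCompactSupport
      (((pd_smooth hg A).continuous.mul continuous_const).mul (pd_smooth hh B).continuous) ?_
    exact (pd_cs hhc B).mul_left
  have step1 : intR (pbr ω g h)
      = ∑ A : Fin n, ∑ B : Fin n, ∫ x, pd g A x * ω A B * pd h B x := by
    show (∫ x, ∑ A : Fin n, ∑ B : Fin n, pd g A x * ω A B * pd h B x) = _
    rw [integral_finset_sum _ fun A _ => integrable_finset_sum _ fun B _ => hint A B]
    exact Finset.sum_congr rfl fun A _ => integral_finset_sum _ fun B _ => hint A B
  -- integration by parts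
  have hibp : ∀ A B : Fin n,
      (∫ x, pd g A x * pd h B x) = - ∫ x, g x * d2 h A B x := by
    intro A B
    have h1 : Integrable (fun x => fderiv ℝ g x (Pi.single A 1) * pd h B x) :=
      Continuous.integrable_of_hasCompactSupport
        ((pd_smooth hg A).continuous.mul (pd_smooth hh B).continuous) (pd_cs hhc B).mul_left
    have h2 : Integrable (fun x => g x * fderiv ℝ (pd h B) x (Pi.single A 1)) := by
      have : (fun x => g x * fderiv ℝ (pd h B) x (Pi.single A 1))
          = fun x => g x * d2 h A B x := by
        funext x; rw [fderiv_pd hh]; rfl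
      rw [this]
      exact Continuous.integrable_of_hasCompactSupport
        (hg.continuous.mul (d2_smooth hh A B).continuous) (d2_cs hhc A B).mul_left
    have h3 : Integrable (fun x => g x * pd h B x) :=
      Continuous.integrable_of_hasCompactSupport
        (hg.continuous.mul (pd_smooth hh B).continuous) (pd_cs hhc B).mul_left
    have := integral_mul_fderiv_eq_neg_fderiv_mul_of_integrable
      (μ := (volume : Measure (Fin n → ℝ))) (v := Pi.single A 1)
      h1 h2 h3 (fun y _ => (diff hg) y) (fun y _ => pd_diff hh B y)
    have heq : (∫ x, g x * fderiv ℝ (pd h B) x (Pi.single A 1))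
        = ∫ x, g x * d2 h A B x := by
      congr 1; funext x; rw [fderiv_pd hh]; rfl
    rw [heq] at this
    have : (∫ x, g x * d2 h A B x) = - ∫ x, pd g A x * pd h B x := this
    rw [this]; ring
  have step2 : ∀ A B : Fin n, (∫ x, pd g A x * ω A B * pd h B x)
      = ω A B * -(∫ x, g x * d2 h A B x) := by
    intro A B
    rw [← hibp A B, ← integral_const_mul]
    congr 1; funext x; ring
  rw [step1]
  simp only [step2]
  -- now use antisymmetry of ω and symmetry of the second derivative
  set K : Fin n → Fin n → ℝ := fun A B => ∫ x, g x * d2 h A B x with hK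
  have hKsymm : ∀ A B, K A B = K B A := by
    intro A B
    simp only [hK]
    congr 1; funext x; rw [d2_symm hh]
  have hω' : ∀ A B : Fin n, ω B A = - ω A B := by
    intro A B
    have := congrFun (congrFun hω A) B
    simpa [Matrix.transpose_apply] using this
  have hswap : ∑ A : Fin n, ∑ B : Fin n, ω A B * K A B
      = - ∑ A : Fin n, ∑ B : Fin n, ω A B * K A B := by
    calc ∑ A : Fin n, ∑ B : Fin n, ω A B * K A B
        = ∑ B : Fin n, ∑ A : Fin n, ω A B * K A B := Finset.sum_comm
      _ = ∑ A : Fin n, ∑ B : Fin n, -(ω A B * K A B) := by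
          refine Finset.sum_congr rfl fun B _ => Finset.sum_congr rfl fun A _ => ?_
          rw [hω' B A, hKsymm A B]; ring
      _ = - ∑ A : Fin n, ∑ B : Fin n, ω A B * K A B := by
          rw [← Finset.sum_neg_distrib]
          exact Finset.sum_congr rfl fun A _ => by rw [Finset.sum_neg_distrib]
  have hzero : ∑ A : Fin n, ∑ B : Fin n, ω A B * K A B = 0 := by linarith
  calc ∑ A : Fin n, ∑ B : Fin n, ω A B * -(K A B)
      = - ∑ A : Fin n, ∑ B : Fin n, ω A B * K A B := by
        rw [← Finset.sum_neg_distrib]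
        refine Finset.sum_congr rfl fun A _ => ?_
        rw [← Finset.sum_neg_distrib]
        exact Finset.sum_congr rfl fun B _ => by ring
    _ = 0 := by rw [hzero, neg_zero]

end M3Aux

open M3Aux

/-- `m₃` is a 2-cocycle of the bosonic Poisson algebra with
coefficients in the adjoint representation. -/
theorem m3_is_two_cocycle
    (n : ℕ) (hn : 0 < n) (ω : Matrix (Fin n) (Fin n) ℝ) (hω : ω.transpose = -ω)
    (f g h : (Fin n → ℝ) → ℝ)
    (hf : IsCcSmooth f) (hg : IsCcSmooth g) (hh : IsCcSmooth h) :
    ∀ x, pbr ω f (m3 g h) x + pbr ω g (m3 h f) x + pbr ω h (m3 f g) x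
        + m3 f (pbr ω g h) x + m3 g (pbr ω h f) x + m3 h (pbr ω f g) x = 0 := by
  obtain ⟨hfs', hfc⟩ := hf
  obtain ⟨hgs', hgc⟩ := hg
  obtain ⟨hhs', hhc⟩ := hh
  have hfs : ContDiff ℝ (((⊤:ℕ∞) : WithTop ℕ∞)) f := hfs'.of_le (by simp)
  have hgs : ContDiff ℝ (((⊤:ℕ∞) : WithTop ℕ∞)) g := hgs'.of_le (by simp)
  have hhs : ContDiff ℝ (((⊤:ℕ∞) : WithTop ℕ∞)) h := hhs'.of_le (by simp)
  intro x
  -- terms of the form {·, m3(·,·)}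
  have E1 : pbr ω f (m3 g h) x
      = intR h * pbr ω f (eulerE g) x - intR g * pbr ω f (eulerE h) x :=
    pbr_comb hfs (eulerE_smooth hgs) (eulerE_smooth hhs) (intR h) (intR g) x
  have E2 : pbr ω g (m3 h f) x
      = intR f * pbr ω g (eulerE h) x - intR h * pbr ω g (eulerE f) x :=
    pbr_comb hgs (eulerE_smooth hhs) (eulerE_smooth hfs) (intR f) (intR h) x
  have E3 : pbr ω h (m3 f g) x
      = intR g * pbr ω h (eulerE f) x - intR f * pbr ω h (eulerE g) x :=
    pbr_comb hhs (eulerE_smooth hfs) (eulerE_smooth hgs) (intR g) (intR f) x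
  -- terms of the form m3(·, {·,·})
  have E4 : m3 f (pbr ω g h) x
      = -((pbr ω (eulerE g) h x + pbr ω g (eulerE h) x) * intR f) := by
    show eulerE f x * intR (pbr ω g h) - eulerE (pbr ω g h) x * intR f = _
    rw [intR_pbr hω hgs hgc hhs hhc, eulerE_pbr hgs hhs]
    ring
  have E5 : m3 g (pbr ω h f) x
      = -((pbr ω (eulerE h) f x + pbr ω h (eulerE f) x) * intR g) := by
    show eulerE g x * intR (pbr ω h f) - eulerE (pbr ω h f) x * intR g = _
    rw [intR_pbr hω hhs hhc hfs hfc, eulerE_pbr hhs hfs]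
    ring
  have E6 : m3 h (pbr ω f g) x
      = -((pbr ω (eulerE f) g x + pbr ω f (eulerE g) x) * intR h) := by
    show eulerE h x * intR (pbr ω f g) - eulerE (pbr ω f g) x * intR h = _
    rw [intR_pbr hω hfs hfc hgs hgc, eulerE_pbr hfs hgs]
    ring
  rw [E1, E2, E3, E4, E5, E6,
    pbr_anti hω (eulerE g) h x, pbr_anti hω (eulerE h) f x, pbr_anti hω (eulerE f) g x]
  ring
end
end

section
/- The Jacobiator of m₃ with itself vanishes: for all f, g, h ∈ D = C_c^∞(ℝ^n), m₃(m₃(f,g), h) + m₃(m₃(g,h), f) + m₃(m₃(h,f), g) = 0, where m₃(f,g) = (ℰf)·ḡ − (ℰg)·f̄. -/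
open MeasureTheory Finset

noncomputable section

section aux

variable {n : ℕ}

lemma dA_contDiff {f : (Fin n → ℝ) → ℝ} (hf : ContDiff ℝ (⊤ : ℕ∞) f) (A : Fin n) :
    ContDiff ℝ (⊤ : ℕ∞) (fun x => fderiv ℝ f x (Pi.single A 1)) :=
  (hf.fderiv_right (by simp)).clm_apply contDiff_const

lemma proj_contDiff (A : Fin n) : ContDiff ℝ (⊤ : ℕ∞) (fun x : Fin n → ℝ => x A) :=
  (ContinuousLinearMap.proj A : (Fin n → ℝ) →L[ℝ] ℝ).contDiff

lemma dA_hcs {f : (Fin n → ℝ) → ℝ} (hf : HasCompactSupport f) (A : Fin n) :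
    HasCompactSupport (fun x => fderiv ℝ f x (Pi.single A 1)) :=
  hf.fderiv_apply ℝ (Pi.single A 1)

lemma eulerE_ccsmooth {f : (Fin n → ℝ) → ℝ} (hf : IsCcSmooth f) : IsCcSmooth (eulerE f) := by
  constructor
  · exact hf.1.sub (contDiff_const.mul (ContDiff.sum fun A _ =>
      (proj_contDiff A).mul (dA_contDiff hf.1 A)))
  · have hsum : ∀ s : Finset (Fin n),
        HasCompactSupport (fun x : Fin n → ℝ => ∑ A ∈ s, x A * fderiv ℝ f x (Pi.single A 1)) := by
      intro s
      induction s using Finset.induction with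
      | empty => simp only [Finset.sum_empty]; exact HasCompactSupport.zero
      | insert a s hA ih =>
          simp only [Finset.sum_insert hA]
          exact ((dA_hcs hf.2 _).mul_left).add ih
    have h1 : HasCompactSupport
        (fun x : Fin n → ℝ => (1/2 : ℝ) * ∑ A : Fin n, x A * fderiv ℝ f x (Pi.single A 1)) :=
      (hsum Finset.univ).mul_left
    have heq : eulerE f = f + -(fun x : Fin n → ℝ =>
        (1/2 : ℝ) * ∑ A : Fin n, x A * fderiv ℝ f x (Pi.single A 1)) := by
      funext y; simp [eulerE, sub_eq_add_neg]
    rw [heq]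
    exact hf.2.add h1.neg

lemma eulerE_integrable {f : (Fin n → ℝ) → ℝ} (hf : IsCcSmooth f) : Integrable (eulerE f) := by
  have h := eulerE_ccsmooth hf
  exact (h.1.continuous).integrable_of_hasCompactSupport h.2

lemma int_coord_mul_deriv {f : (Fin n → ℝ) → ℝ} (hf : IsCcSmooth f) (A : Fin n) :
    ∫ x : Fin n → ℝ, x A * fderiv ℝ f x (Pi.single A 1) = - ∫ x : Fin n → ℝ, f x := by
  have hproj : ∀ x : Fin n → ℝ,
      fderiv ℝ (fun y : Fin n → ℝ => y A) x (Pi.single A 1) = 1 := by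
    intro x
    rw [show (fun y : Fin n → ℝ => y A) =
        ⇑(ContinuousLinearMap.proj A : (Fin n → ℝ) →L[ℝ] ℝ) from rfl,
      (ContinuousLinearMap.proj A : (Fin n → ℝ) →L[ℝ] ℝ).fderiv]
    simp
  have hfint : Integrable f := hf.1.continuous.integrable_of_hasCompactSupport hf.2
  have hfg : Integrable (fun x : Fin n → ℝ => x A * f x) :=
    (((proj_contDiff A).continuous).mul hf.1.continuous).integrable_of_hasCompactSupport
      hf.2.mul_left
  have hfg' : Integrable (fun x : Fin n → ℝ => x A * fderiv ℝ f x (Pi.single A 1)) :=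
    (((proj_contDiff A).continuous).mul (dA_contDiff hf.1 A).continuous).integrable_of_hasCompactSupport
      (dA_hcs hf.2 A).mul_left
  have hf'g : Integrable
      (fun x : Fin n → ℝ => fderiv ℝ (fun y : Fin n → ℝ => y A) x (Pi.single A 1) * f x) := by
    simpa [hproj] using hfint
  have key := integral_mul_fderiv_eq_neg_fderiv_mul_of_integrable (μ := volume)
    (f := fun y : Fin n → ℝ => y A) (g := f) (v := Pi.single A 1)
    hf'g hfg' hfg (fun x _ => ((proj_contDiff A).differentiable (by simp)) x)
    (fun x _ => hf.1.differentiable (by simp) x)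
  simpa [hproj] using key

lemma int_eulerE {f : (Fin n → ℝ) → ℝ} (hf : IsCcSmooth f) :
    intR (eulerE f) = (1 + (n : ℝ)/2) * intR f := by
  have hfint : Integrable f := hf.1.continuous.integrable_of_hasCompactSupport hf.2
  have hterm : ∀ A : Fin n,
      Integrable (fun x : Fin n → ℝ => x A * fderiv ℝ f x (Pi.single A 1)) := fun A =>
    (((proj_contDiff A).continuous).mul (dA_contDiff hf.1 A).continuous).integrable_of_hasCompactSupport
      (dA_hcs hf.2 A).mul_left
  have hsumint : Integrable
      (fun x : Fin n → ℝ => ∑ A : Fin n, x A * fderiv ℝ f x (Pi.single A 1)) :=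
    integrable_finset_sum _ fun A _ => hterm A
  unfold intR eulerE
  rw [integral_sub hfint (hsumint.const_mul _), integral_const_mul,
    integral_finset_sum _ fun A _ => hterm A]
  have : ∀ A ∈ (Finset.univ : Finset (Fin n)),
      (∫ x : Fin n → ℝ, x A * fderiv ℝ f x (Pi.single A 1)) = - ∫ x : Fin n → ℝ, f x :=
    fun A _ => int_coord_mul_deriv hf A
  rw [Finset.sum_congr rfl this]
  simp [Finset.sum_const, Finset.card_univ]
  ring

lemma intR_m3 {f g : (Fin n → ℝ) → ℝ} (hf : IsCcSmooth f) (hg : IsCcSmooth g) :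
    intR (m3 f g) = 0 := by
  have h1 := eulerE_integrable hf
  have h2 := eulerE_integrable hg
  unfold intR m3
  rw [integral_sub (h1.mul_const _) (h2.mul_const _), integral_mul_const, integral_mul_const]
  have e1 : (∫ x, eulerE f x) = intR (eulerE f) := rfl
  have e2 : (∫ x, eulerE g x) = intR (eulerE g) := rfl
  rw [e1, e2, int_eulerE hf, int_eulerE hg]
  ring

lemma eulerE_m3 {f g : (Fin n → ℝ) → ℝ} (hf : IsCcSmooth f) (hg : IsCcSmooth g)
    (x : Fin n → ℝ) :
    eulerE (m3 f g) x = eulerE (eulerE f) x * intR g - eulerE (eulerE g) x * intR f := by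
  have hF : Differentiable ℝ (eulerE f) := ((eulerE_ccsmooth hf).1).differentiable (by simp)
  have hG : Differentiable ℝ (eulerE g) := ((eulerE_ccsmooth hg).1).differentiable (by simp)
  have hd : HasFDerivAt (m3 f g)
      (intR g • fderiv ℝ (eulerE f) x - intR f • fderiv ℝ (eulerE g) x) x := by
    have h1 := ((hF x).hasFDerivAt.mul_const (intR g)).sub
      ((hG x).hasFDerivAt.mul_const (intR f))
    exact h1
  have hfd : fderiv ℝ (m3 f g) x =
      intR g • fderiv ℝ (eulerE f) x - intR f • fderiv ℝ (eulerE g) x := hd.fderiv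
  have hsum : ∑ A : Fin n, x A *
      ((intR g • fderiv ℝ (eulerE f) x - intR f • fderiv ℝ (eulerE g) x) (Pi.single A 1)) =
      intR g * ∑ A : Fin n, x A * fderiv ℝ (eulerE f) x (Pi.single A 1) -
      intR f * ∑ A : Fin n, x A * fderiv ℝ (eulerE g) x (Pi.single A 1) := by
    rw [Finset.mul_sum, Finset.mul_sum, ← Finset.sum_sub_distrib]
    refine Finset.sum_congr rfl fun A _ => ?_
    simp only [ContinuousLinearMap.sub_apply, ContinuousLinearMap.smul_apply, smul_eq_mul]
    ring
  show m3 f g x - (1/2 : ℝ) * ∑ A : Fin n, x A * fderiv ℝ (m3 f g) x (Pi.single A 1) = _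
  rw [hfd, hsum]
  show m3 f g x - _ = (eulerE f x - _) * intR g - (eulerE g x - _) * intR f
  rw [show m3 f g x = eulerE f x * intR g - eulerE g x * intR f from rfl]
  ring

end aux

/-- the Jacobiator of `m₃` with itself vanishes. -/
theorem m3_jacobiator_eq_zero
    (n : ℕ) (f g h : (Fin n → ℝ) → ℝ)
    (hf : IsCcSmooth f) (hg : IsCcSmooth g) (hh : IsCcSmooth h) :
    ∀ x, m3 (m3 f g) h x + m3 (m3 g h) f x + m3 (m3 h f) g x = 0 := by
  intro x
  have e1 : m3 (m3 f g) h x = eulerE (m3 f g) x * intR h - eulerE h x * intR (m3 f g) := rfl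
  have e2 : m3 (m3 g h) f x = eulerE (m3 g h) x * intR f - eulerE f x * intR (m3 g h) := rfl
  have e3 : m3 (m3 h f) g x = eulerE (m3 h f) x * intR g - eulerE g x * intR (m3 h f) := rfl
  rw [e1, e2, e3, intR_m3 hf hg, intR_m3 hg hh, intR_m3 hh hf,
    eulerE_m3 hf hg x, eulerE_m3 hg hh x, eulerE_m3 hh hf x]
  ring
end
end

section
/- For every constant c ∈ ℝ, the bracket C(f,g) = {f,g} + c·m₃(f,g) is a Lie bracket on D = C_c^∞(ℝ^n): it is bilinear, antisymmetric, maps D × D into D, and satisfies the Jacobi identity C(f, C(g,h)) + C(g, C(h,f)) + C(h, C(f,g)) = 0 for all f, g, h ∈ D. -/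
open MeasureTheory Finset

noncomputable section

set_option maxHeartbeats 1600000

namespace PPaux

variable {n : ℕ}

lemma contDiff_pd {f : (Fin n → ℝ) → ℝ} (hf : ContDiff ℝ (⊤ : ℕ∞) f) (v : Fin n → ℝ) :
    ContDiff ℝ (⊤ : ℕ∞) (fun x => fderiv ℝ f x v) :=
  (ContinuousLinearMap.apply ℝ ℝ v).contDiff.comp (hf.fderiv_right (by simp))

lemma diff_pd {f : (Fin n → ℝ) → ℝ} (hf : ContDiff ℝ (⊤ : ℕ∞) f) (v : Fin n → ℝ) (x) :
    DifferentiableAt ℝ (fun x => fderiv ℝ f x v) x :=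
  ((contDiff_pd hf v).differentiable (by simp)).differentiableAt

lemma diffAt {f : (Fin n → ℝ) → ℝ} (hf : ContDiff ℝ (⊤ : ℕ∞) f) (x) :
    DifferentiableAt ℝ f x :=
  (hf.differentiable (by simp)).differentiableAt

lemma hcs_pd {f : (Fin n → ℝ) → ℝ} (hf : HasCompactSupport f) (v : Fin n → ℝ) :
    HasCompactSupport (fun x => fderiv ℝ f x v) :=
  hf.fderiv_apply ℝ v

lemma hcs_sum {ι : Type*} (s : Finset ι) (f : ι → (Fin n → ℝ) → ℝ)
    (h : ∀ i ∈ s, HasCompactSupport (f i)) :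
    HasCompactSupport (fun x => ∑ i ∈ s, f i x) := by
  classical
  induction s using Finset.induction_on with
  | empty => simpa [HasCompactSupport, tsupport] using isCompact_empty
  | insert _ _ hnot ih =>
    rename_i a s
    simp only [Finset.sum_insert hnot]
    exact (h a (Finset.mem_insert_self a s)).add
      (ih fun i hi => h i (Finset.mem_insert_of_mem hi))


lemma hcs_sub {f g : (Fin n → ℝ) → ℝ} (hf : HasCompactSupport f) (hg : HasCompactSupport g) :
    HasCompactSupport (fun x => f x - g x) := by
  have h' : HasCompactSupport (fun x => f x + -g x) := hf.add hg.neg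
  simpa [sub_eq_add_neg] using h'

lemma ccs_pbr {ω : Matrix (Fin n) (Fin n) ℝ} {f g : (Fin n → ℝ) → ℝ}
    (hf : IsCcSmooth f) (hg : IsCcSmooth g) : IsCcSmooth (pbr ω f g) := by
  constructor
  · apply ContDiff.sum (fun A _ => ?_)
    apply ContDiff.sum (fun B _ => ?_)
    exact ((contDiff_pd hf.1 _).mul contDiff_const).mul (contDiff_pd hg.1 _)
  · apply hcs_sum
    intro A _
    apply hcs_sum
    intro B _
    exact ((hcs_pd hf.2 _).mul_right).mul_right

lemma ccs_eulerE {f : (Fin n → ℝ) → ℝ} (hf : IsCcSmooth f) : IsCcSmooth (eulerE f) := by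
  constructor
  · apply hf.1.sub
    apply contDiff_const.mul
    apply ContDiff.sum (fun A _ => ?_)
    exact ((ContinuousLinearMap.proj A : (Fin n → ℝ) →L[ℝ] ℝ).contDiff).mul
      (contDiff_pd hf.1 _)
  · apply hcs_sub hf.2
    apply HasCompactSupport.mul_left
    apply hcs_sum
    intro A _
    exact (hcs_pd hf.2 _).mul_left

lemma ccs_m3 {f g : (Fin n → ℝ) → ℝ} (hf : IsCcSmooth f) (hg : IsCcSmooth g) :
    IsCcSmooth (m3 f g) := by
  constructor
  · exact ((ccs_eulerE hf).1.mul contDiff_const).sub ((ccs_eulerE hg).1.mul contDiff_const)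
  · exact hcs_sub ((ccs_eulerE hf).2.mul_right) ((ccs_eulerE hg).2.mul_right)

lemma ccs_comb {ω : Matrix (Fin n) (Fin n) ℝ} {c : ℝ} {f g : (Fin n → ℝ) → ℝ}
    (hf : IsCcSmooth f) (hg : IsCcSmooth g) :
    IsCcSmooth (fun x => pbr ω f g x + c * m3 f g x) := by
  constructor
  · exact (ccs_pbr hf hg).1.add (contDiff_const.mul (ccs_m3 hf hg).1)
  · exact (ccs_pbr hf hg).2.add ((ccs_m3 hf hg).2.mul_left)

lemma integrable_ccs {f : (Fin n → ℝ) → ℝ} (hf : IsCcSmooth f) : Integrable f :=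
  hf.1.continuous.integrable_of_hasCompactSupport hf.2

lemma ccs_pdf {f : (Fin n → ℝ) → ℝ} (hf : IsCcSmooth f) (v : Fin n → ℝ) :
    IsCcSmooth (fun x => fderiv ℝ f x v) :=
  ⟨contDiff_pd hf.1 v, hcs_pd hf.2 v⟩

lemma int_pd_zero {f : (Fin n → ℝ) → ℝ} (hf : IsCcSmooth f) (v : Fin n → ℝ) :
    ∫ x, fderiv ℝ f x v = 0 := by
  obtain ⟨C, hC⟩ := ContDiff.lipschitzWith_of_hasCompactSupport hf.2 hf.1 (by simp)
  have h := LipschitzWith.integral_lineDeriv_mul_eq (C := 0) (D := C)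
    (f := fun _ => (1:ℝ)) (g := f) (μ := volume) (LipschitzWith.const 1) hC hf.2 (-v)
  have hc : ∀ (x w : Fin n → ℝ), lineDeriv ℝ (fun _ : Fin n → ℝ => (1:ℝ)) x w = 0 := by
    intro x w; simp [lineDeriv]
  simp only [hc, zero_mul, integral_zero, neg_neg, mul_one] at h
  have : ∀ x, lineDeriv ℝ f x v = fderiv ℝ f x v := fun x =>
    ((hf.1.differentiable (by simp)).differentiableAt).lineDeriv_eq_fderiv
  rw [← integral_congr_ae (Filter.Eventually.of_forall this)]
  exact h.symm

/-- `∫ x_A ∂_A f = - ∫ f` -/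
lemma int_xpd {f : (Fin n → ℝ) → ℝ} (hf : IsCcSmooth f) (A : Fin n) :
    ∫ x, x A * fderiv ℝ f x (Pi.single A 1) = - intR f := by
  set g : (Fin n → ℝ) → ℝ := fun y => y A * f y with hg
  have hcproj : ∀ x : Fin n → ℝ, DifferentiableAt ℝ (fun z : Fin n → ℝ => z A) x := fun x =>
    (ContinuousLinearMap.proj A : (Fin n → ℝ) →L[ℝ] ℝ).differentiable.differentiableAt
  have hgccs : IsCcSmooth g := by
    constructor
    · exact ((ContinuousLinearMap.proj A : (Fin n → ℝ) →L[ℝ] ℝ).contDiff).mul hf.1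
    · exact hf.2.mul_left
  have hfd : ∀ x, fderiv ℝ g x (Pi.single A 1) = f x + x A * fderiv ℝ f x (Pi.single A 1) := by
    intro x
    rw [hg]
    rw [fderiv_fun_mul (hcproj x) (diffAt hf.1 x)]
    have hproj : fderiv ℝ (fun z : Fin n → ℝ => z A) x (Pi.single A 1) = 1 := by
      have h2 : fderiv ℝ (fun z : Fin n → ℝ => z A) x
          = (ContinuousLinearMap.proj A : (Fin n → ℝ) →L[ℝ] ℝ) :=
        (ContinuousLinearMap.proj A : (Fin n → ℝ) →L[ℝ] ℝ).fderiv
      rw [h2]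
      simp [ContinuousLinearMap.proj_apply]
    simp only [ContinuousLinearMap.add_apply, ContinuousLinearMap.smul_apply, smul_eq_mul, hproj]
    ring
  have h0 : ∫ x, fderiv ℝ g x (Pi.single A 1) = 0 := int_pd_zero hgccs _
  rw [integral_congr_ae (Filter.Eventually.of_forall hfd)] at h0
  have hint1 : Integrable f := integrable_ccs hf
  have hint2 : Integrable (fun x : Fin n → ℝ => x A * fderiv ℝ f x (Pi.single A 1)) := by
    apply Continuous.integrable_of_hasCompactSupport
    · exact ((ContinuousLinearMap.proj A : (Fin n → ℝ) →L[ℝ] ℝ).continuous).mul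
        (contDiff_pd hf.1 _).continuous
    · exact (hcs_pd hf.2 _).mul_left
  rw [integral_add hint1 hint2] at h0
  unfold intR
  linarith

/-- `∫ ℰf = (1 + n/2) ∫ f` -/
lemma int_eulerE {f : (Fin n → ℝ) → ℝ} (hf : IsCcSmooth f) :
    intR (eulerE f) = (1 + (n : ℝ)/2) * intR f := by
  have hint2 : ∀ A : Fin n, Integrable (fun x : Fin n → ℝ =>
      x A * fderiv ℝ f x (Pi.single A 1)) := by
    intro A
    apply Continuous.integrable_of_hasCompactSupport
    · exact ((ContinuousLinearMap.proj A : (Fin n → ℝ) →L[ℝ] ℝ).continuous).mul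
        (contDiff_pd hf.1 _).continuous
    · exact (hcs_pd hf.2 _).mul_left
  have hintsum : Integrable (fun x : Fin n → ℝ =>
      ∑ A : Fin n, x A * fderiv ℝ f x (Pi.single A 1)) :=
    integrable_finset_sum _ (fun A _ => hint2 A)
  unfold intR eulerE
  rw [integral_sub (integrable_ccs hf) (hintsum.const_mul _), integral_const_mul,
    integral_finset_sum _ (fun A _ => hint2 A)]
  have : ∀ A ∈ Finset.univ, (∫ x, x A * fderiv ℝ f x (Pi.single A 1)) = - intR f :=
    fun A _ => int_xpd hf A
  rw [Finset.sum_congr rfl this]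
  simp only [Finset.sum_const, Finset.card_univ, Fintype.card_fin, nsmul_eq_mul]
  unfold intR
  ring

lemma int_m3_zero {f g : (Fin n → ℝ) → ℝ} (hf : IsCcSmooth f) (hg : IsCcSmooth g)
    (hef : IsCcSmooth (eulerE f)) (heg : IsCcSmooth (eulerE g)) :
    intR (m3 f g) = 0 := by
  unfold m3 intR
  rw [integral_sub ((integrable_ccs hef).mul_const _) ((integrable_ccs heg).mul_const _),
    integral_mul_const, integral_mul_const]
  have h1 : (∫ x, eulerE f x) = (1 + (n : ℝ)/2) * intR f := int_eulerE hf
  have h2 : (∫ x, eulerE g x) = (1 + (n : ℝ)/2) * intR g := int_eulerE hg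
  rw [h1, h2]
  unfold intR
  ring

lemma sd_symm {f : (Fin n → ℝ) → ℝ} (hf : ContDiff ℝ (⊤ : ℕ∞) f) (x v w : Fin n → ℝ) :
    fderiv ℝ (fun y => fderiv ℝ f y v) x w = fderiv ℝ (fun y => fderiv ℝ f y w) x v := by
  have hdf : Differentiable ℝ (fderiv ℝ f) := (hf.fderiv_right (m := (⊤ : ℕ∞)) (by simp)).differentiable (by simp)
  have key : ∀ u : Fin n → ℝ, fderiv ℝ (fun y => fderiv ℝ f y u) x
      = ((fderiv ℝ (fderiv ℝ f) x).flip u) := by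
    intro u
    have : (fun y => fderiv ℝ f y u) = fun y => (fderiv ℝ f y) u := rfl
    rw [this, fderiv_clm_apply (hdf.differentiableAt) (differentiableAt_const u)]
    simp
  rw [key v, key w]
  exact second_derivative_symmetric (fun y => (diffAt hf y).hasFDerivAt)
    (hdf.differentiableAt).hasFDerivAt w v

lemma antisym_symm_sum (ω' : Matrix (Fin n) (Fin n) ℝ) (K : Fin n → Fin n → ℝ)
    (hω : ∀ A B, ω' B A = - ω' A B) (hK : ∀ A B, K A B = K B A) :
    ∑ A : Fin n, ∑ B : Fin n, ω' A B * K A B = 0 := by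
  have h1 : ∑ A : Fin n, ∑ B : Fin n, ω' A B * K A B
      = ∑ A : Fin n, ∑ B : Fin n, ω' B A * K B A := Finset.sum_comm
  have h2 : ∑ A : Fin n, ∑ B : Fin n, ω' B A * K B A
      = ∑ A : Fin n, ∑ B : Fin n, -(ω' A B * K A B) := by
    refine Finset.sum_congr rfl (fun A _ => Finset.sum_congr rfl (fun B _ => ?_))
    rw [hω A B, hK A B]; ring
  rw [h2] at h1
  simp only [Finset.sum_neg_distrib] at h1
  linarith

/-- `∫ {f,g} = 0` -/
lemma int_pbr_zero {ω : Matrix (Fin n) (Fin n) ℝ} (hω : ω.transpose = -ω)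
    {f g : (Fin n → ℝ) → ℝ} (hf : IsCcSmooth f) (hg : IsCcSmooth g) :
    intR (pbr ω f g) = 0 := by
  have hω' : ∀ A B, ω B A = - ω A B := by
    intro A B
    have := congrFun (congrFun hω A) B
    simpa [Matrix.transpose_apply, Matrix.neg_apply] using this
  have hintterm : ∀ A B : Fin n, Integrable (fun x : Fin n → ℝ =>
      fderiv ℝ f x (Pi.single A 1) * ω A B * fderiv ℝ g x (Pi.single B 1)) := by
    intro A B
    apply Continuous.integrable_of_hasCompactSupport
    · exact ((contDiff_pd hf.1 _).continuous.mul continuous_const).mul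
        (contDiff_pd hg.1 _).continuous
    · exact ((hcs_pd hf.2 _).mul_right).mul_right
  have hS : ∀ A B : Fin n, Integrable (fun x : Fin n → ℝ =>
      f x * fderiv ℝ (fun y => fderiv ℝ g y (Pi.single B 1)) x (Pi.single A 1)) := by
    intro A B
    apply Continuous.integrable_of_hasCompactSupport
    · exact hf.1.continuous.mul (contDiff_pd (contDiff_pd hg.1 _) _).continuous
    · exact hf.2.mul_right
  -- key: ∫ ∂_A f ∂_B g = - ∫ f ∂_A ∂_B g
  have hkey : ∀ A B : Fin n, ∫ x, fderiv ℝ f x (Pi.single A 1) * ω A B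
        * fderiv ℝ g x (Pi.single B 1)
      = ω A B * (- ∫ x, f x * fderiv ℝ (fun y => fderiv ℝ g y (Pi.single B 1)) x
          (Pi.single A 1)) := by
    intro A B
    have hprod : IsCcSmooth (fun y => f y * fderiv ℝ g y (Pi.single B 1)) :=
      ⟨hf.1.mul (contDiff_pd hg.1 _), hf.2.mul_right⟩
    have h0 : ∫ x, fderiv ℝ (fun y => f y * fderiv ℝ g y (Pi.single B 1)) x (Pi.single A 1)
        = 0 := int_pd_zero hprod _
    have hfd : ∀ x, fderiv ℝ (fun y => f y * fderiv ℝ g y (Pi.single B 1)) x (Pi.single A 1)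
        = f x * fderiv ℝ (fun y => fderiv ℝ g y (Pi.single B 1)) x (Pi.single A 1)
          + fderiv ℝ g x (Pi.single B 1) * fderiv ℝ f x (Pi.single A 1) := by
      intro x
      rw [fderiv_fun_mul (diffAt hf.1 x) (diff_pd hg.1 _ x)]
      simp only [ContinuousLinearMap.add_apply, ContinuousLinearMap.smul_apply, smul_eq_mul]
    rw [integral_congr_ae (Filter.Eventually.of_forall hfd)] at h0
    have hBA : Integrable (fun x : Fin n → ℝ =>
        fderiv ℝ g x (Pi.single B 1) * fderiv ℝ f x (Pi.single A 1)) := by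
      apply Continuous.integrable_of_hasCompactSupport
      · exact (contDiff_pd hg.1 _).continuous.mul (contDiff_pd hf.1 _).continuous
      · exact (hcs_pd hg.2 _).mul_right
    rw [integral_add (hS A B) hBA] at h0
    have heq : ∫ x, fderiv ℝ f x (Pi.single A 1) * ω A B * fderiv ℝ g x (Pi.single B 1)
        = ∫ x, ω A B * (fderiv ℝ g x (Pi.single B 1) * fderiv ℝ f x (Pi.single A 1)) :=
      integral_congr_ae (Filter.Eventually.of_forall (fun x => by ring))
    rw [heq, integral_const_mul]
    congr 1
    linarith
  unfold intR pbr
  rw [integral_finset_sum _ (fun A _ => integrable_finset_sum _ (fun B _ => hintterm A B))]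
  have : ∀ A ∈ Finset.univ, (∫ x, ∑ B : Fin n, fderiv ℝ f x (Pi.single A 1) * ω A B
      * fderiv ℝ g x (Pi.single B 1)) = ∑ B : Fin n, ω A B
        * (- ∫ x, f x * fderiv ℝ (fun y => fderiv ℝ g y (Pi.single B 1)) x (Pi.single A 1)) := by
    intro A _
    rw [integral_finset_sum _ (fun B _ => hintterm A B)]
    exact Finset.sum_congr rfl (fun B _ => hkey A B)
  rw [Finset.sum_congr rfl this]
  apply antisym_symm_sum ω _ hω'
  intro A B
  congr 1
  apply integral_congr_ae (Filter.Eventually.of_forall (fun x => ?_))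
  rw [sd_symm hg.1 x _ _]
/-- the quadruple contraction `p ω M ω q` -/
def RR (ω : Matrix (Fin n) (Fin n) ℝ) (M : Fin n → Fin n → ℝ) (p q : Fin n → ℝ) : ℝ :=
  ∑ A : Fin n, ∑ B : Fin n, ∑ C : Fin n, ∑ D : Fin n,
    p A * ω A B * M B C * ω C D * q D

lemma RR_symm (ω : Matrix (Fin n) (Fin n) ℝ) (hω : ∀ A B, ω B A = - ω A B)
    (M : Fin n → Fin n → ℝ) (hM : ∀ A B, M A B = M B A) (p q : Fin n → ℝ) :
    RR ω M p q = RR ω M q p := by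
  have h1 : RR ω M p q = ∑ z : Fin n × Fin n × Fin n × Fin n,
      p z.1 * ω z.1 z.2.1 * M z.2.1 z.2.2.1 * ω z.2.2.1 z.2.2.2 * q z.2.2.2 := by
    rw [Fintype.sum_prod_type, ]
    refine Finset.sum_congr rfl (fun A _ => ?_)
    rw [Fintype.sum_prod_type]
    refine Finset.sum_congr rfl (fun B _ => ?_)
    rw [Fintype.sum_prod_type]
  have h2 : RR ω M q p = ∑ z : Fin n × Fin n × Fin n × Fin n,
      q z.1 * ω z.1 z.2.1 * M z.2.1 z.2.2.1 * ω z.2.2.1 z.2.2.2 * p z.2.2.2 := by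
    rw [Fintype.sum_prod_type]
    refine Finset.sum_congr rfl (fun A _ => ?_)
    rw [Fintype.sum_prod_type]
    refine Finset.sum_congr rfl (fun B _ => ?_)
    rw [Fintype.sum_prod_type]
  rw [h1, h2]
  refine Fintype.sum_equiv ⟨fun z => (z.2.2.2, z.2.2.1, z.2.1, z.1),
    fun z => (z.2.2.2, z.2.2.1, z.2.1, z.1), fun z => rfl, fun z => rfl⟩ _ _ (fun z => ?_)
  obtain ⟨a, b, c, d⟩ := z
  show p a * ω a b * M b c * ω c d * q d = q d * ω d c * M c b * ω b a * p a
  rw [hω d c, hω b a, hM c b]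
  ring

lemma expand1 (ω : Matrix (Fin n) (Fin n) ℝ) (M : Fin n → Fin n → ℝ) (p q : Fin n → ℝ) :
    ∑ A : Fin n, ∑ B : Fin n, p A * ω A B *
      (∑ C : Fin n, ∑ D : Fin n, M B C * ω C D * q D) = RR ω M p q := by
  unfold RR
  refine Finset.sum_congr rfl (fun A _ => Finset.sum_congr rfl (fun B _ => ?_))
  rw [Finset.mul_sum]
  refine Finset.sum_congr rfl (fun C _ => ?_)
  rw [Finset.mul_sum]
  exact Finset.sum_congr rfl (fun D _ => by ring)

lemma expand2 (ω : Matrix (Fin n) (Fin n) ℝ) (hω : ∀ A B, ω B A = - ω A B)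
    (M : Fin n → Fin n → ℝ) (p q : Fin n → ℝ) :
    ∑ A : Fin n, ∑ B : Fin n, p A * ω A B *
      (∑ C : Fin n, ∑ D : Fin n, q C * ω C D * M B D) = - RR ω M p q := by
  have inner : ∀ B : Fin n, (∑ C : Fin n, ∑ D : Fin n, q C * ω C D * M B D)
      = - ∑ C : Fin n, ∑ D : Fin n, M B C * ω C D * q D := by
    intro B
    rw [Finset.sum_comm, ← Finset.sum_neg_distrib]
    refine Finset.sum_congr rfl (fun C _ => ?_)
    rw [← Finset.sum_neg_distrib]
    refine Finset.sum_congr rfl (fun D _ => ?_)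
    rw [hω D C]
    ring
  unfold RR
  rw [← Finset.sum_neg_distrib]
  refine Finset.sum_congr rfl (fun A _ => ?_)
  rw [← Finset.sum_neg_distrib]
  refine Finset.sum_congr rfl (fun B _ => ?_)
  rw [inner B, mul_neg]
  congr 1
  rw [Finset.mul_sum]
  refine Finset.sum_congr rfl (fun C _ => ?_)
  rw [Finset.mul_sum]
  exact Finset.sum_congr rfl (fun D _ => by ring)

lemma key_split (ω : Matrix (Fin n) (Fin n) ℝ) (hω : ∀ A B, ω B A = - ω A B)
    (p q r : Fin n → ℝ) (M N : Fin n → Fin n → ℝ) :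
    ∑ A : Fin n, ∑ B : Fin n, p A * ω A B *
      (∑ C : Fin n, ∑ D : Fin n, (M B C * ω C D * q D + r C * ω C D * N B D))
    = RR ω M p q - RR ω N p r := by
  have h : ∀ A B : Fin n, p A * ω A B *
      (∑ C : Fin n, ∑ D : Fin n, (M B C * ω C D * q D + r C * ω C D * N B D))
      = p A * ω A B * (∑ C : Fin n, ∑ D : Fin n, M B C * ω C D * q D)
        + p A * ω A B * (∑ C : Fin n, ∑ D : Fin n, r C * ω C D * N B D) := by
    intro A B
    rw [← mul_add]
    congr 1
    rw [← Finset.sum_add_distrib]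
    exact Finset.sum_congr rfl (fun C _ => by rw [← Finset.sum_add_distrib])
  calc ∑ A : Fin n, ∑ B : Fin n, p A * ω A B *
      (∑ C : Fin n, ∑ D : Fin n, (M B C * ω C D * q D + r C * ω C D * N B D))
      = ∑ A : Fin n, ∑ B : Fin n,
        (p A * ω A B * (∑ C : Fin n, ∑ D : Fin n, M B C * ω C D * q D)
        + p A * ω A B * (∑ C : Fin n, ∑ D : Fin n, r C * ω C D * N B D)) := by
        exact Finset.sum_congr rfl (fun A _ => Finset.sum_congr rfl (fun B _ => h A B))
    _ = (∑ A : Fin n, ∑ B : Fin n, p A * ω A B *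
          (∑ C : Fin n, ∑ D : Fin n, M B C * ω C D * q D))
        + ∑ A : Fin n, ∑ B : Fin n, p A * ω A B *
          (∑ C : Fin n, ∑ D : Fin n, r C * ω C D * N B D) := by
        rw [← Finset.sum_add_distrib]
        exact Finset.sum_congr rfl (fun A _ => by rw [← Finset.sum_add_distrib])
    _ = RR ω M p q - RR ω N p r := by
        rw [expand1, expand2 ω hω]
        ring

lemma alg_jacobi (ω : Matrix (Fin n) (Fin n) ℝ) (hω : ∀ A B, ω B A = - ω A B)
    (u v w : Fin n → ℝ) (Hf Hg Hh : Fin n → Fin n → ℝ)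
    (hHf : ∀ A B, Hf A B = Hf B A) (hHg : ∀ A B, Hg A B = Hg B A)
    (hHh : ∀ A B, Hh A B = Hh B A) :
    (∑ A : Fin n, ∑ B : Fin n, u A * ω A B *
      (∑ C : Fin n, ∑ D : Fin n, (Hg B C * ω C D * w D + v C * ω C D * Hh B D)))
    + (∑ A : Fin n, ∑ B : Fin n, v A * ω A B *
      (∑ C : Fin n, ∑ D : Fin n, (Hh B C * ω C D * u D + w C * ω C D * Hf B D)))
    + (∑ A : Fin n, ∑ B : Fin n, w A * ω A B *
      (∑ C : Fin n, ∑ D : Fin n, (Hf B C * ω C D * v D + u C * ω C D * Hg B D))) = 0 := by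
  rw [key_split ω hω u w v Hg Hh, key_split ω hω v u w Hh Hf, key_split ω hω w v u Hf Hg,
    RR_symm ω hω Hg hHg u w, RR_symm ω hω Hh hHh v u, RR_symm ω hω Hf hHf w v]
  ring

lemma fderiv_comb {p q : (Fin n → ℝ) → ℝ} {x : Fin n → ℝ}
    (hp : DifferentiableAt ℝ p x) (hq : DifferentiableAt ℝ q x) (a b : ℝ) (v : Fin n → ℝ) :
    fderiv ℝ (fun y => a * p y + b * q y) x v = a * fderiv ℝ p x v + b * fderiv ℝ q x v := by
  rw [fderiv_fun_add ((hp.const_mul a)) ((hq.const_mul b)), fderiv_const_mul hp, fderiv_const_mul hq]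
  simp

lemma fderiv_pbr {ω : Matrix (Fin n) (Fin n) ℝ} {f g : (Fin n → ℝ) → ℝ}
    (hf : ContDiff ℝ (⊤ : ℕ∞) f) (hg : ContDiff ℝ (⊤ : ℕ∞) g) (x v : Fin n → ℝ) :
    fderiv ℝ (pbr ω f g) x v = ∑ A : Fin n, ∑ B : Fin n,
      (fderiv ℝ (fun y => fderiv ℝ f y (Pi.single A 1)) x v * ω A B
          * fderiv ℝ g x (Pi.single B 1)
        + fderiv ℝ f x (Pi.single A 1) * ω A B
          * fderiv ℝ (fun y => fderiv ℝ g y (Pi.single B 1)) x v) := by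
  have hterm : ∀ (A B : Fin n) (y : Fin n → ℝ), DifferentiableAt ℝ
      (fun z => fderiv ℝ f z (Pi.single A 1) * ω A B * fderiv ℝ g z (Pi.single B 1)) y := by
    intro A B y
    exact ((diff_pd hf _ y).mul_const (ω A B)).mul (diff_pd hg _ y)
  have hBsum : ∀ (A : Fin n) (y : Fin n → ℝ), DifferentiableAt ℝ
      (fun z => ∑ B : Fin n, fderiv ℝ f z (Pi.single A 1) * ω A B
        * fderiv ℝ g z (Pi.single B 1)) y := by
    intro A y
    exact DifferentiableAt.fun_sum (fun B _ => hterm A B y)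
  have h1 : fderiv ℝ (pbr ω f g) x = ∑ A : Fin n, fderiv ℝ
      (fun z => ∑ B : Fin n, fderiv ℝ f z (Pi.single A 1) * ω A B
        * fderiv ℝ g z (Pi.single B 1)) x := by
    exact fderiv_fun_sum (fun A _ => hBsum A x)
  rw [h1, ContinuousLinearMap.sum_apply]
  refine Finset.sum_congr rfl (fun A _ => ?_)
  rw [fderiv_fun_sum (fun B _ => hterm A B x), ContinuousLinearMap.sum_apply]
  refine Finset.sum_congr rfl (fun B _ => ?_)
  rw [fderiv_fun_mul ((diff_pd hf _ x).mul_const (ω A B)) (diff_pd hg _ x)]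
  rw [ContinuousLinearMap.add_apply, ContinuousLinearMap.smul_apply,
    ContinuousLinearMap.smul_apply, fderiv_mul_const (diff_pd hf _ x)]
  simp only [ContinuousLinearMap.smul_apply, smul_eq_mul]
  ring

lemma fderiv_eulerE {f : (Fin n → ℝ) → ℝ} (hf : ContDiff ℝ (⊤ : ℕ∞) f) (x v : Fin n → ℝ) :
    fderiv ℝ (eulerE f) x v = fderiv ℝ f x v - (1/2) * ∑ A : Fin n,
      (v A * fderiv ℝ f x (Pi.single A 1)
        + x A * fderiv ℝ (fun y => fderiv ℝ f y (Pi.single A 1)) x v) := by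
  have hA : ∀ (A : Fin n) (y : Fin n → ℝ), DifferentiableAt ℝ
      (fun z => z A * fderiv ℝ f z (Pi.single A 1)) y := by
    intro A y
    exact ((ContinuousLinearMap.proj A : (Fin n → ℝ) →L[ℝ] ℝ).differentiable.differentiableAt).mul
      (diff_pd hf _ y)
  have hsum : ∀ y, DifferentiableAt ℝ
      (fun z => ∑ A : Fin n, z A * fderiv ℝ f z (Pi.single A 1)) y :=
    fun y => DifferentiableAt.fun_sum (fun A _ => hA A y)
  have h0 : eulerE f = fun z => f z - (1/2) *
      ∑ A : Fin n, z A * fderiv ℝ f z (Pi.single A 1) := rfl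
  rw [h0, fderiv_fun_sub (diffAt hf x) ((hsum x).const_mul _), ContinuousLinearMap.sub_apply,
    fderiv_const_mul (hsum x), ContinuousLinearMap.smul_apply,
    fderiv_fun_sum (fun A _ => hA A x), ContinuousLinearMap.sum_apply]
  congr 1
  rw [smul_eq_mul]
  congr 1
  refine Finset.sum_congr rfl (fun A _ => ?_)
  have hc : DifferentiableAt ℝ (fun z : Fin n → ℝ => z A) x :=
    (ContinuousLinearMap.proj A : (Fin n → ℝ) →L[ℝ] ℝ).differentiable.differentiableAt
  rw [fderiv_fun_mul hc (diff_pd hf _ x)]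
  have hproj : fderiv ℝ (fun z : Fin n → ℝ => z A) x v = v A := by
    have : fderiv ℝ (fun z : Fin n → ℝ => z A) x
        = (ContinuousLinearMap.proj A : (Fin n → ℝ) →L[ℝ] ℝ) :=
      (ContinuousLinearMap.proj A : (Fin n → ℝ) →L[ℝ] ℝ).fderiv
    rw [this]; rfl
  simp only [ContinuousLinearMap.add_apply, ContinuousLinearMap.smul_apply, smul_eq_mul, hproj]
  ring

/- ### sum helpers -/

lemma sum2_add (X Y : Fin n → Fin n → ℝ) :
    ∑ A : Fin n, ∑ B : Fin n, (X A B + Y A B)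
      = (∑ A : Fin n, ∑ B : Fin n, X A B) + ∑ A : Fin n, ∑ B : Fin n, Y A B := by
  rw [← Finset.sum_add_distrib]
  exact Finset.sum_congr rfl (fun A _ => by rw [← Finset.sum_add_distrib])

lemma sum2_smul (a : ℝ) (X : Fin n → Fin n → ℝ) :
    ∑ A : Fin n, ∑ B : Fin n, a * X A B = a * ∑ A : Fin n, ∑ B : Fin n, X A B := by
  rw [Finset.mul_sum]
  exact Finset.sum_congr rfl (fun A _ => by rw [Finset.mul_sum])

lemma sum3_swap (T : Fin n → Fin n → Fin n → ℝ) :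
    ∑ C : Fin n, ∑ A : Fin n, ∑ B : Fin n, T C A B
      = ∑ A : Fin n, ∑ B : Fin n, ∑ C : Fin n, T C A B := by
  rw [Finset.sum_comm]
  exact Finset.sum_congr rfl (fun A _ => Finset.sum_comm)

/-- single-collapse: `∑ C, (Pi.single A 1) C * F C = F A` -/
lemma sum_single_mul (A : Fin n) (F : Fin n → ℝ) :
    ∑ C : Fin n, (Pi.single A 1 : Fin n → ℝ) C * F C = F A := by
  have h : ∀ C : Fin n, (Pi.single A 1 : Fin n → ℝ) C * F C
      = if C = A then F C else 0 := by
    intro C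
    rcases eq_or_ne C A with h | h
    · subst h; simp
    · simp [Pi.single_apply, h]
  rw [Finset.sum_congr rfl (fun C _ => h C), Finset.sum_ite_eq' Finset.univ A F]
  simp

/-- derivative of `ℰf` in coordinate direction -/
lemma fderiv_eulerE_single {f : (Fin n → ℝ) → ℝ} (hf : ContDiff ℝ (⊤ : ℕ∞) f) (x : Fin n → ℝ)
    (A : Fin n) :
    fderiv ℝ (eulerE f) x (Pi.single A 1) = (1/2) * fderiv ℝ f x (Pi.single A 1)
      - (1/2) * ∑ C : Fin n, x C
          * fderiv ℝ (fun y => fderiv ℝ f y (Pi.single A 1)) x (Pi.single C 1) := by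
  rw [fderiv_eulerE hf x (Pi.single A 1), Finset.sum_add_distrib,
    sum_single_mul A (fun C => fderiv ℝ f x (Pi.single C 1))]
  have hsy : ∀ C ∈ Finset.univ, x C
        * fderiv ℝ (fun y => fderiv ℝ f y (Pi.single C 1)) x (Pi.single A 1)
      = x C * fderiv ℝ (fun y => fderiv ℝ f y (Pi.single A 1)) x (Pi.single C 1) := by
    intro C _
    rw [sd_symm hf]
  rw [Finset.sum_congr rfl hsy]
  ring


lemma sum_pull3 (x : Fin n → ℝ) (U : Fin n → Fin n → Fin n → ℝ) :
    ∑ A : Fin n, ∑ B : Fin n, ∑ C : Fin n, x C * U C A B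
      = ∑ C : Fin n, x C * ∑ A : Fin n, ∑ B : Fin n, U C A B := by
  rw [← sum3_swap (fun C A B => x C * U C A B)]
  refine Finset.sum_congr rfl (fun C _ => ?_)
  rw [sum2_smul]

/-- `ℰ` is a derivation for the Poisson bracket -/
lemma euler_leibniz {ω : Matrix (Fin n) (Fin n) ℝ} {f g : (Fin n → ℝ) → ℝ}
    (hf : ContDiff ℝ (⊤ : ℕ∞) f) (hg : ContDiff ℝ (⊤ : ℕ∞) g) (x : Fin n → ℝ) :
    eulerE (pbr ω f g) x = pbr ω (eulerE f) g x + pbr ω f (eulerE g) x := by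
  have ePP : pbr ω f g x = ∑ A : Fin n, ∑ B : Fin n,
      fderiv ℝ f x (Pi.single A 1) * ω A B * fderiv ℝ g x (Pi.single B 1) := rfl
  have h1 : eulerE (pbr ω f g) x = pbr ω f g x - (1/2) *
      ((∑ C : Fin n, x C * ∑ A : Fin n, ∑ B : Fin n,
          fderiv ℝ (fun y => fderiv ℝ f y (Pi.single A 1)) x (Pi.single C 1) * ω A B
            * fderiv ℝ g x (Pi.single B 1))
        + ∑ C : Fin n, x C * ∑ A : Fin n, ∑ B : Fin n,
          fderiv ℝ f x (Pi.single A 1) * ω A B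
            * fderiv ℝ (fun y => fderiv ℝ g y (Pi.single B 1)) x (Pi.single C 1)) := by
    have e0 : eulerE (pbr ω f g) x = pbr ω f g x - (1/2) *
        ∑ C : Fin n, x C * fderiv ℝ (pbr ω f g) x (Pi.single C 1) := rfl
    rw [e0]
    congr 1
    congr 1
    rw [← Finset.sum_add_distrib]
    refine Finset.sum_congr rfl (fun C _ => ?_)
    rw [fderiv_pbr hf hg x (Pi.single C 1), sum2_add, mul_add]
  have h2 : pbr ω (eulerE f) g x = (1/2) * pbr ω f g x - (1/2) *
      ∑ C : Fin n, x C * ∑ A : Fin n, ∑ B : Fin n,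
        fderiv ℝ (fun y => fderiv ℝ f y (Pi.single A 1)) x (Pi.single C 1) * ω A B
          * fderiv ℝ g x (Pi.single B 1) := by
    have e1 : pbr ω (eulerE f) g x = ∑ A : Fin n, ∑ B : Fin n,
        fderiv ℝ (eulerE f) x (Pi.single A 1) * ω A B * fderiv ℝ g x (Pi.single B 1) := rfl
    rw [e1]
    have step1 : ∀ A B : Fin n, fderiv ℝ (eulerE f) x (Pi.single A 1) * ω A B
          * fderiv ℝ g x (Pi.single B 1)
        = (1/2) * (fderiv ℝ f x (Pi.single A 1) * ω A B * fderiv ℝ g x (Pi.single B 1))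
          + (-(1/2)) * ∑ C : Fin n, x C *
            (fderiv ℝ (fun y => fderiv ℝ f y (Pi.single A 1)) x (Pi.single C 1) * ω A B
              * fderiv ℝ g x (Pi.single B 1)) := by
      intro A B
      rw [fderiv_eulerE_single hf x A]
      have expand : ∀ (S FA w GB : ℝ), ((1/2)*FA - (1/2)*S) * w * GB
          = (1/2)*(FA*w*GB) + (-(1/2))*(S*(w*GB)) := by intros; ring
      rw [expand]
      congr 1
      rw [Finset.sum_mul]
      congr 1
      exact Finset.sum_congr rfl (fun C _ => by ring)
    rw [Finset.sum_congr rfl (fun A _ => Finset.sum_congr rfl (fun B _ => step1 A B)),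
      sum2_add, sum2_smul, sum2_smul, sum_pull3, ePP]
    ring
  have h3 : pbr ω f (eulerE g) x = (1/2) * pbr ω f g x - (1/2) *
      ∑ C : Fin n, x C * ∑ A : Fin n, ∑ B : Fin n,
        fderiv ℝ f x (Pi.single A 1) * ω A B
          * fderiv ℝ (fun y => fderiv ℝ g y (Pi.single B 1)) x (Pi.single C 1) := by
    have e1 : pbr ω f (eulerE g) x = ∑ A : Fin n, ∑ B : Fin n,
        fderiv ℝ f x (Pi.single A 1) * ω A B * fderiv ℝ (eulerE g) x (Pi.single B 1) := rfl
    rw [e1]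
    have step1 : ∀ A B : Fin n, fderiv ℝ f x (Pi.single A 1) * ω A B
          * fderiv ℝ (eulerE g) x (Pi.single B 1)
        = (1/2) * (fderiv ℝ f x (Pi.single A 1) * ω A B * fderiv ℝ g x (Pi.single B 1))
          + (-(1/2)) * ∑ C : Fin n, x C *
            (fderiv ℝ f x (Pi.single A 1) * ω A B
              * fderiv ℝ (fun y => fderiv ℝ g y (Pi.single B 1)) x (Pi.single C 1)) := by
      intro A B
      rw [fderiv_eulerE_single hg x B]
      have expand : ∀ (S FA w GB : ℝ), FA * w * ((1/2)*GB - (1/2)*S)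
          = (1/2)*(FA*w*GB) + (-(1/2))*(S*(FA*w)) := by intros; ring
      rw [expand]
      congr 1
      rw [Finset.sum_mul]
      congr 1
      exact Finset.sum_congr rfl (fun C _ => by ring)
    rw [Finset.sum_congr rfl (fun A _ => Finset.sum_congr rfl (fun B _ => step1 A B)),
      sum2_add, sum2_smul, sum2_smul, sum_pull3, ePP]
    ring
  rw [h1, h2, h3]
  ring


/-- pointwise antisymmetry of the Poisson bracket -/
lemma pbr_antisym {ω : Matrix (Fin n) (Fin n) ℝ} (hω : ∀ A B, ω B A = - ω A B)
    (f g : (Fin n → ℝ) → ℝ) (x : Fin n → ℝ) :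
    pbr ω f g x = - pbr ω g f x := by
  have e1 : pbr ω g f x = ∑ A : Fin n, ∑ B : Fin n,
      fderiv ℝ g x (Pi.single A 1) * ω A B * fderiv ℝ f x (Pi.single B 1) := rfl
  have e2 : pbr ω f g x = ∑ A : Fin n, ∑ B : Fin n,
      fderiv ℝ f x (Pi.single A 1) * ω A B * fderiv ℝ g x (Pi.single B 1) := rfl
  rw [e1, e2]
  rw [Finset.sum_comm]
  rw [← Finset.sum_neg_distrib]
  refine Finset.sum_congr rfl (fun A _ => ?_)
  rw [← Finset.sum_neg_distrib]
  refine Finset.sum_congr rfl (fun B _ => ?_)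
  rw [hω B A]
  ring

/-- pointwise left linearity of the Poisson bracket -/
lemma pbr_left_comb {ω : Matrix (Fin n) (Fin n) ℝ} {f g : (Fin n → ℝ) → ℝ}
    (hf : ContDiff ℝ (⊤ : ℕ∞) f) (hg : ContDiff ℝ (⊤ : ℕ∞) g) (h : (Fin n → ℝ) → ℝ) (a b : ℝ)
    (x : Fin n → ℝ) :
    pbr ω (fun y => a * f y + b * g y) h x = a * pbr ω f h x + b * pbr ω g h x := by
  have e2 : pbr ω f h x = ∑ A : Fin n, ∑ B : Fin n,
      fderiv ℝ f x (Pi.single A 1) * ω A B * fderiv ℝ h x (Pi.single B 1) := rfl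
  have e3 : pbr ω g h x = ∑ A : Fin n, ∑ B : Fin n,
      fderiv ℝ g x (Pi.single A 1) * ω A B * fderiv ℝ h x (Pi.single B 1) := rfl
  have e1 : pbr ω (fun y => a * f y + b * g y) h x = ∑ A : Fin n, ∑ B : Fin n,
      fderiv ℝ (fun y => a * f y + b * g y) x (Pi.single A 1) * ω A B
        * fderiv ℝ h x (Pi.single B 1) := rfl
  rw [e1, e2, e3, ← sum2_smul, ← sum2_smul, ← sum2_add]
  refine Finset.sum_congr rfl (fun A _ => Finset.sum_congr rfl (fun B _ => ?_))
  rw [fderiv_comb (diffAt hf x) (diffAt hg x)]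
  ring

/-- pointwise right linearity of the Poisson bracket -/
lemma pbr_right_comb {ω : Matrix (Fin n) (Fin n) ℝ} {g h : (Fin n → ℝ) → ℝ}
    (hg : ContDiff ℝ (⊤ : ℕ∞) g) (hh : ContDiff ℝ (⊤ : ℕ∞) h) (f : (Fin n → ℝ) → ℝ) (a b : ℝ)
    (x : Fin n → ℝ) :
    pbr ω f (fun y => a * g y + b * h y) x = a * pbr ω f g x + b * pbr ω f h x := by
  have e2 : pbr ω f g x = ∑ A : Fin n, ∑ B : Fin n,
      fderiv ℝ f x (Pi.single A 1) * ω A B * fderiv ℝ g x (Pi.single B 1) := rfl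
  have e3 : pbr ω f h x = ∑ A : Fin n, ∑ B : Fin n,
      fderiv ℝ f x (Pi.single A 1) * ω A B * fderiv ℝ h x (Pi.single B 1) := rfl
  have e1 : pbr ω f (fun y => a * g y + b * h y) x = ∑ A : Fin n, ∑ B : Fin n,
      fderiv ℝ f x (Pi.single A 1) * ω A B
        * fderiv ℝ (fun y => a * g y + b * h y) x (Pi.single B 1) := rfl
  rw [e1, e2, e3, ← sum2_smul, ← sum2_smul, ← sum2_add]
  refine Finset.sum_congr rfl (fun A _ => Finset.sum_congr rfl (fun B _ => ?_))
  rw [fderiv_comb (diffAt hg x) (diffAt hh x)]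
  ring

/-- pointwise linearity of `ℰ` -/
lemma eulerE_comb {p q : (Fin n → ℝ) → ℝ}
    (hp : ContDiff ℝ (⊤ : ℕ∞) p) (hq : ContDiff ℝ (⊤ : ℕ∞) q) (a b : ℝ) (x : Fin n → ℝ) :
    eulerE (fun y => a * p y + b * q y) x = a * eulerE p x + b * eulerE q x := by
  have e1 : eulerE (fun y => a * p y + b * q y) x = (a * p x + b * q x) - (1/2) *
      ∑ A : Fin n, x A * fderiv ℝ (fun y => a * p y + b * q y) x (Pi.single A 1) := rfl
  have e2 : eulerE p x = p x - (1/2) *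
      ∑ A : Fin n, x A * fderiv ℝ p x (Pi.single A 1) := rfl
  have e3 : eulerE q x = q x - (1/2) *
      ∑ A : Fin n, x A * fderiv ℝ q x (Pi.single A 1) := rfl
  rw [e1, e2, e3]
  have hsum : ∑ A : Fin n, x A * fderiv ℝ (fun y => a * p y + b * q y) x (Pi.single A 1)
      = ∑ A : Fin n, (a * (x A * fderiv ℝ p x (Pi.single A 1))
        + b * (x A * fderiv ℝ q x (Pi.single A 1))) := by
    refine Finset.sum_congr rfl (fun A _ => ?_)
    rw [fderiv_comb (diffAt hp x) (diffAt hq x)]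
    ring
  rw [hsum, Finset.sum_add_distrib, ← Finset.mul_sum, ← Finset.mul_sum]
  ring


/-- linearity of the integral on combinations -/
lemma intR_comb {p q : (Fin n → ℝ) → ℝ} (hp : Integrable p) (hq : Integrable q) (a b : ℝ) :
    intR (fun x => a * p x + b * q x) = a * intR p + b * intR q := by
  unfold intR
  rw [integral_add (hp.const_mul a) (hq.const_mul b), integral_const_mul, integral_const_mul]

lemma intR_add_mul {p q : (Fin n → ℝ) → ℝ} (hp : Integrable p) (hq : Integrable q) (c : ℝ) :
    intR (fun x => p x + c * q x) = intR p + c * intR q := by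
  unfold intR
  rw [integral_add hp (hq.const_mul c), integral_const_mul]

lemma m3_left_comb {f g : (Fin n → ℝ) → ℝ} (hf : IsCcSmooth f) (hg : IsCcSmooth g)
    (h : (Fin n → ℝ) → ℝ) (a b : ℝ) (x : Fin n → ℝ) :
    m3 (fun y => a * f y + b * g y) h x = a * m3 f h x + b * m3 g h x := by
  unfold m3
  rw [eulerE_comb hf.1 hg.1 a b x, intR_comb (integrable_ccs hf) (integrable_ccs hg) a b]
  ring

lemma m3_right_comb {g h : (Fin n → ℝ) → ℝ} (hg : IsCcSmooth g) (hh : IsCcSmooth h)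
    (f : (Fin n → ℝ) → ℝ) (a b : ℝ) (x : Fin n → ℝ) :
    m3 f (fun y => a * g y + b * h y) x = a * m3 f g x + b * m3 f h x := by
  unfold m3
  rw [eulerE_comb hg.1 hh.1 a b x, intR_comb (integrable_ccs hg) (integrable_ccs hh) a b]
  ring

/-- rewriting `m3 g h` as a linear combination of `ℰg` and `ℰh` -/
lemma m3_as_comb (g h : (Fin n → ℝ) → ℝ) :
    m3 g h = fun y => intR h * eulerE g y + (- intR g) * eulerE h y := by
  funext y
  unfold m3
  ring

/-- the Jacobi identity for the pure Poisson bracket, pointwise -/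
lemma jacobi_pbr {ω : Matrix (Fin n) (Fin n) ℝ} (hω' : ∀ A B, ω B A = - ω A B)
    {f g h : (Fin n → ℝ) → ℝ} (hf : ContDiff ℝ (⊤ : ℕ∞) f) (hg : ContDiff ℝ (⊤ : ℕ∞) g)
    (hh : ContDiff ℝ (⊤ : ℕ∞) h) (x : Fin n → ℝ) :
    pbr ω f (pbr ω g h) x + pbr ω g (pbr ω h f) x + pbr ω h (pbr ω f g) x = 0 := by
  have e1 : pbr ω f (pbr ω g h) x = ∑ A : Fin n, ∑ B : Fin n,
      fderiv ℝ f x (Pi.single A 1) * ω A B * fderiv ℝ (pbr ω g h) x (Pi.single B 1) := rfl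
  have e2 : pbr ω g (pbr ω h f) x = ∑ A : Fin n, ∑ B : Fin n,
      fderiv ℝ g x (Pi.single A 1) * ω A B * fderiv ℝ (pbr ω h f) x (Pi.single B 1) := rfl
  have e3 : pbr ω h (pbr ω f g) x = ∑ A : Fin n, ∑ B : Fin n,
      fderiv ℝ h x (Pi.single A 1) * ω A B * fderiv ℝ (pbr ω f g) x (Pi.single B 1) := rfl
  rw [e1, e2, e3]
  have E1 : (∑ A : Fin n, ∑ B : Fin n,
      fderiv ℝ f x (Pi.single A 1) * ω A B * fderiv ℝ (pbr ω g h) x (Pi.single B 1))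
      = ∑ A : Fin n, ∑ B : Fin n, fderiv ℝ f x (Pi.single A 1) * ω A B *
        (∑ C : Fin n, ∑ D : Fin n,
          (fderiv ℝ (fun y => fderiv ℝ g y (Pi.single C 1)) x (Pi.single B 1) * ω C D
              * fderiv ℝ h x (Pi.single D 1)
            + fderiv ℝ g x (Pi.single C 1) * ω C D
              * fderiv ℝ (fun y => fderiv ℝ h y (Pi.single D 1)) x (Pi.single B 1))) :=
    Finset.sum_congr rfl (fun A _ => Finset.sum_congr rfl (fun B _ => by
      rw [fderiv_pbr hg hh x (Pi.single B 1)]))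
  have E2 : (∑ A : Fin n, ∑ B : Fin n,
      fderiv ℝ g x (Pi.single A 1) * ω A B * fderiv ℝ (pbr ω h f) x (Pi.single B 1))
      = ∑ A : Fin n, ∑ B : Fin n, fderiv ℝ g x (Pi.single A 1) * ω A B *
        (∑ C : Fin n, ∑ D : Fin n,
          (fderiv ℝ (fun y => fderiv ℝ h y (Pi.single C 1)) x (Pi.single B 1) * ω C D
              * fderiv ℝ f x (Pi.single D 1)
            + fderiv ℝ h x (Pi.single C 1) * ω C D
              * fderiv ℝ (fun y => fderiv ℝ f y (Pi.single D 1)) x (Pi.single B 1))) :=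
    Finset.sum_congr rfl (fun A _ => Finset.sum_congr rfl (fun B _ => by
      rw [fderiv_pbr hh hf x (Pi.single B 1)]))
  have E3 : (∑ A : Fin n, ∑ B : Fin n,
      fderiv ℝ h x (Pi.single A 1) * ω A B * fderiv ℝ (pbr ω f g) x (Pi.single B 1))
      = ∑ A : Fin n, ∑ B : Fin n, fderiv ℝ h x (Pi.single A 1) * ω A B *
        (∑ C : Fin n, ∑ D : Fin n,
          (fderiv ℝ (fun y => fderiv ℝ f y (Pi.single C 1)) x (Pi.single B 1) * ω C D
              * fderiv ℝ g x (Pi.single D 1)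
            + fderiv ℝ f x (Pi.single C 1) * ω C D
              * fderiv ℝ (fun y => fderiv ℝ g y (Pi.single D 1)) x (Pi.single B 1))) :=
    Finset.sum_congr rfl (fun A _ => Finset.sum_congr rfl (fun B _ => by
      rw [fderiv_pbr hf hg x (Pi.single B 1)]))
  rw [E1, E2, E3]
  exact alg_jacobi ω hω'
    (fun A => fderiv ℝ f x (Pi.single A 1))
    (fun A => fderiv ℝ g x (Pi.single A 1))
    (fun A => fderiv ℝ h x (Pi.single A 1))
    (fun B C => fderiv ℝ (fun y => fderiv ℝ f y (Pi.single C 1)) x (Pi.single B 1))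
    (fun B C => fderiv ℝ (fun y => fderiv ℝ g y (Pi.single C 1)) x (Pi.single B 1))
    (fun B C => fderiv ℝ (fun y => fderiv ℝ h y (Pi.single C 1)) x (Pi.single B 1))
    (fun A B => sd_symm hf x _ _) (fun A B => sd_symm hg x _ _) (fun A B => sd_symm hh x _ _)

/-- expansion of the outer `pbr` against a deformed bracket -/
lemma bigH1 {ω : Matrix (Fin n) (Fin n) ℝ} (c : ℝ) {f g h : (Fin n → ℝ) → ℝ}
    (hf : IsCcSmooth f) (hg : IsCcSmooth g) (hh : IsCcSmooth h) (x : Fin n → ℝ) :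
    pbr ω f (fun y => pbr ω g h y + c * m3 g h y) x
      = pbr ω f (pbr ω g h) x
        + c * (intR h * pbr ω f (eulerE g) x + (- intR g) * pbr ω f (eulerE h) x) := by
  have hrw : (fun y => pbr ω g h y + c * m3 g h y)
      = fun y => 1 * pbr ω g h y + c * m3 g h y := by
    funext y; ring
  rw [hrw, pbr_right_comb (ccs_pbr hg hh).1 (ccs_m3 hg hh).1 f 1 c x]
  rw [m3_as_comb g h, pbr_right_comb (ccs_eulerE hg).1 (ccs_eulerE hh).1 f (intR h) (- intR g) x]
  ring

/-- expansion of the outer `m3` against a deformed bracket -/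
lemma bigH2 {ω : Matrix (Fin n) (Fin n) ℝ} (hω : ω.transpose = -ω) (c : ℝ)
    {f g h : (Fin n → ℝ) → ℝ}
    (hf : IsCcSmooth f) (hg : IsCcSmooth g) (hh : IsCcSmooth h) (x : Fin n → ℝ) :
    m3 f (fun y => pbr ω g h y + c * m3 g h y) x
      = - intR f * ((pbr ω (eulerE g) h x + pbr ω g (eulerE h) x)
        + c * (intR h * eulerE (eulerE g) x + (- intR g) * eulerE (eulerE h) x)) := by
  have hm : m3 f (fun y => pbr ω g h y + c * m3 g h y) x
      = eulerE f x * intR (fun y => pbr ω g h y + c * m3 g h y)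
        - eulerE (fun y => pbr ω g h y + c * m3 g h y) x * intR f := rfl
  rw [hm]
  have hint0 : intR (fun y => pbr ω g h y + c * m3 g h y) = 0 := by
    rw [intR_add_mul (integrable_ccs (ccs_pbr hg hh)) (integrable_ccs (ccs_m3 hg hh)) c,
      int_pbr_zero hω hg hh, int_m3_zero hg hh (ccs_eulerE hg) (ccs_eulerE hh)]
    ring
  have heul : eulerE (fun y => pbr ω g h y + c * m3 g h y) x
      = (pbr ω (eulerE g) h x + pbr ω g (eulerE h) x)
        + c * (intR h * eulerE (eulerE g) x + (- intR g) * eulerE (eulerE h) x) := by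
    have hrw : (fun y => pbr ω g h y + c * m3 g h y)
        = fun y => 1 * pbr ω g h y + c * m3 g h y := by
      funext y; ring
    rw [hrw, eulerE_comb (ccs_pbr hg hh).1 (ccs_m3 hg hh).1 1 c x,
      euler_leibniz hg.1 hh.1 x, m3_as_comb g h,
      eulerE_comb (ccs_eulerE hg).1 (ccs_eulerE hh).1 (intR h) (- intR g) x]
    ring
  rw [hint0, heul]
  ring

end PPaux

open PPaux in
/-- for any constant `c`, `C(f,g) = {f,g} + c·m₃(f,g)` is a Lie
bracket on `D = C_c^∞(ℝ^n)`. -/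
theorem pbr_plus_c_m3_is_lie_bracket
    (n : ℕ) (hn : 0 < n) (ω : Matrix (Fin n) (Fin n) ℝ) (hω : ω.transpose = -ω)
    (c : ℝ) :
    (∀ (a b : ℝ) (f g h : (Fin n → ℝ) → ℝ), IsCcSmooth f → IsCcSmooth g → IsCcSmooth h →
        (fun x => pbr ω (fun y => a * f y + b * g y) h x
            + c * m3 (fun y => a * f y + b * g y) h x)
          = fun x => a * (pbr ω f h x + c * m3 f h x) + b * (pbr ω g h x + c * m3 g h x)) ∧
    (∀ (a b : ℝ) (f g h : (Fin n → ℝ) → ℝ), IsCcSmooth f → IsCcSmooth g → IsCcSmooth h →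
        (fun x => pbr ω f (fun y => a * g y + b * h y) x
            + c * m3 f (fun y => a * g y + b * h y) x)
          = fun x => a * (pbr ω f g x + c * m3 f g x) + b * (pbr ω f h x + c * m3 f h x)) ∧
    (∀ f g : (Fin n → ℝ) → ℝ, IsCcSmooth f → IsCcSmooth g →
        IsCcSmooth (fun x => pbr ω f g x + c * m3 f g x)) ∧
    (∀ f g : (Fin n → ℝ) → ℝ, IsCcSmooth f → IsCcSmooth g →
        (fun x => pbr ω f g x + c * m3 f g x)
          = fun x => -(pbr ω g f x + c * m3 g f x)) ∧
    (∀ f g h : (Fin n → ℝ) → ℝ, IsCcSmooth f → IsCcSmooth g → IsCcSmooth h →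
        ∀ x,
          (pbr ω f (fun y => pbr ω g h y + c * m3 g h y) x
              + c * m3 f (fun y => pbr ω g h y + c * m3 g h y) x)
          + (pbr ω g (fun y => pbr ω h f y + c * m3 h f y) x
              + c * m3 g (fun y => pbr ω h f y + c * m3 h f y) x)
          + (pbr ω h (fun y => pbr ω f g y + c * m3 f g y) x
              + c * m3 h (fun y => pbr ω f g y + c * m3 f g y) x) = 0) := by
  have hω' : ∀ A B, ω B A = - ω A B := by
    intro A B
    have := congrFun (congrFun hω A) B
    simpa [Matrix.transpose_apply, Matrix.neg_apply] using this
  refine ⟨?_, ?_, ?_, ?_, ?_⟩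
  · intro a b f g h hf hg hh
    funext x
    rw [pbr_left_comb hf.1 hg.1 h a b x, m3_left_comb hf hg h a b x]
    ring
  · intro a b f g h hf hg hh
    funext x
    rw [pbr_right_comb hg.1 hh.1 f a b x, m3_right_comb hg hh f a b x]
    ring
  · intro f g hf hg
    exact ccs_comb hf hg
  · intro f g hf hg
    funext x
    have h1 := pbr_antisym hω' f g x
    have h2 : m3 f g x = - m3 g f x := by unfold m3; ring
    rw [h1, h2]
    ring
  · intro f g h hf hg hh x
    rw [bigH1 c hf hg hh x, bigH2 hω c hf hg hh x,
        bigH1 c hg hh hf x, bigH2 hω c hg hh hf x,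
        bigH1 c hh hf hg x, bigH2 hω c hh hf hg x]
    have hJ := jacobi_pbr hω' hf.1 hg.1 hh.1 x
    have a1 : pbr ω (eulerE g) h x = - pbr ω h (eulerE g) x := pbr_antisym hω' _ _ x
    have a2 : pbr ω (eulerE h) f x = - pbr ω f (eulerE h) x := pbr_antisym hω' _ _ x
    have a3 : pbr ω (eulerE f) g x = - pbr ω g (eulerE f) x := pbr_antisym hω' _ _ x
    rw [a1, a2, a3]
    linear_combination hJ
end
end

section
/- Let ζ : ℝ^n → ℝ be smooth and define the linear operator T_ζ on smooth functions by T_ζ f = f + ζ·f̄ (for f of compact support). Then for all f, g ∈ D = C_c^∞(ℝ^n), the conjugation identity {T_ζ f, T_ζ g} = T_ζ({f,g} − m_ζ(f,g)) holds, where m_ζ(f,g) = {ζ,f}·ḡ − {ζ,g}·f̄; in particular the bracket {·,·} − m_ζ(·,·) on D is obtained from the Poisson bracket by the similarity transformation T_ζ. -/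
open MeasureTheory Finset

noncomputable section

namespace MzetaAux

variable {n : ℕ}

lemma contDiff_pd {h : (Fin n → ℝ) → ℝ} (hh : ContDiff ℝ (⊤ : ℕ∞) h) (v : Fin n → ℝ) :
    ContDiff ℝ (⊤ : ℕ∞) (fun x => fderiv ℝ h x v) :=
  (ContinuousLinearMap.apply ℝ ℝ v).contDiff.comp (hh.fderiv_right (by simp))

lemma hcs_pd {u : (Fin n → ℝ) → ℝ} (hcu : HasCompactSupport u) (v : Fin n → ℝ) :
    HasCompactSupport (fun x => fderiv ℝ u x v) :=
  (hcu.fderiv (𝕜 := ℝ)).comp_left (g := fun L : (Fin n → ℝ) →L[ℝ] ℝ => L v) rfl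

lemma int_mul {p u : (Fin n → ℝ) → ℝ} (hp : Continuous p) (hu : Continuous u)
    (hcu : HasCompactSupport u) : Integrable (fun x => p x * u x) :=
  (hp.mul hu).integrable_of_hasCompactSupport hcu.mul_left

lemma fderiv_pd {h : (Fin n → ℝ) → ℝ} (hh : ContDiff ℝ (⊤ : ℕ∞) h) (x v w : Fin n → ℝ) :
    fderiv ℝ (fun y => fderiv ℝ h y v) x w = fderiv ℝ (fderiv ℝ h) x w v := by
  have H : HasFDerivAt (fun y => fderiv ℝ h y v)
      ((ContinuousLinearMap.apply ℝ ℝ v).comp (fderiv ℝ (fderiv ℝ h) x)) x :=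
    (ContinuousLinearMap.apply ℝ ℝ v).hasFDerivAt.comp x
      (((hh.fderiv_right (m := (⊤ : ℕ∞)) (by simp)).differentiable (by simp) x).hasFDerivAt)
  rw [H.fderiv]; rfl

lemma snd_symm {h : (Fin n → ℝ) → ℝ} (hh : ContDiff ℝ (⊤ : ℕ∞) h) (x v w : Fin n → ℝ) :
    fderiv ℝ (fderiv ℝ h) x v w = fderiv ℝ (fderiv ℝ h) x w v :=
  second_derivative_symmetric (fun y => (hh.differentiable (by simp) y).hasFDerivAt)
    (((hh.fderiv_right (m := (⊤ : ℕ∞)) (by simp)).differentiable (by simp) x).hasFDerivAt) v w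

/-- integration by parts: ∫ ∂_v h · ∂_w u = - ∫ ∂_w(∂_v h) · u. -/
lemma ibp {h u : (Fin n → ℝ) → ℝ} (hh : ContDiff ℝ (⊤ : ℕ∞) h) (hu : ContDiff ℝ (⊤ : ℕ∞) u)
    (hcu : HasCompactSupport u) (v w : Fin n → ℝ) :
    ∫ x, fderiv ℝ h x v * fderiv ℝ u x w
      = - ∫ x, fderiv ℝ (fun y => fderiv ℝ h y v) x w * u x := by
  exact integral_mul_fderiv_eq_neg_fderiv_mul_of_integrable
    (int_mul ((contDiff_pd (contDiff_pd hh v) w).continuous) hu.continuous hcu)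
    (int_mul (contDiff_pd hh v).continuous (contDiff_pd hu w).continuous (hcs_pd hcu w))
    (int_mul (contDiff_pd hh v).continuous hu.continuous hcu)
    (fun x _ => (contDiff_pd hh v).differentiable (by simp) x)
    (fun x _ => hu.differentiable (by simp) x)

lemma hcs_pbr (ω : Matrix (Fin n) (Fin n) ℝ) {h u : (Fin n → ℝ) → ℝ}
    (hcu : HasCompactSupport u) : HasCompactSupport (pbr ω h u) := by
  apply HasCompactSupport.intro hcu
  intro x hx
  have h0 : fderiv ℝ u x = 0 := by
    by_contra h0
    exact hx (support_fderiv_subset ℝ (Function.mem_support.2 h0))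
  simp [pbr, h0]

lemma cont_pbr (ω : Matrix (Fin n) (Fin n) ℝ) {h u : (Fin n → ℝ) → ℝ}
    (hh : ContDiff ℝ (⊤ : ℕ∞) h) (hu : ContDiff ℝ (⊤ : ℕ∞) u) : Continuous (pbr ω h u) := by
  apply continuous_finset_sum; intro A _
  apply continuous_finset_sum; intro B _
  exact (((contDiff_pd hh _).continuous.mul continuous_const).mul
    (contDiff_pd hu _).continuous)

lemma int_pbr (ω : Matrix (Fin n) (Fin n) ℝ) {h u : (Fin n → ℝ) → ℝ}
    (hh : ContDiff ℝ (⊤ : ℕ∞) h) (hu : ContDiff ℝ (⊤ : ℕ∞) u) (hcu : HasCompactSupport u) :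
    Integrable (pbr ω h u) :=
  (cont_pbr ω hh hu).integrable_of_hasCompactSupport (hcs_pbr ω hcu)

/-- the key vanishing lemma: ∫ {h, u} = 0. -/
lemma intR_pbr (ω : Matrix (Fin n) (Fin n) ℝ) (hω : ω.transpose = -ω)
    {h u : (Fin n → ℝ) → ℝ} (hh : ContDiff ℝ (⊤ : ℕ∞) h) (hu : ContDiff ℝ (⊤ : ℕ∞) u)
    (hcu : HasCompactSupport u) : intR (pbr ω h u) = 0 := by
  have hωswap : ∀ A B, ω B A = -ω A B := by
    intro A B
    have := congrFun (congrFun hω A) B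
    simpa [Matrix.transpose_apply] using this
  have hint : ∀ (A B : Fin n), Integrable (fun x =>
      fderiv ℝ h x (Pi.single A 1) * ω A B * fderiv ℝ u x (Pi.single B 1)) := by
    intro A B
    exact int_mul (p := fun x => fderiv ℝ h x (Pi.single A 1) * ω A B)
      ((contDiff_pd hh (Pi.single A 1)).continuous.mul continuous_const)
      (contDiff_pd hu (Pi.single B 1)).continuous (hcs_pd hcu (Pi.single B 1))
  have hsplit : intR (pbr ω h u) = ∑ A : Fin n, ∑ B : Fin n,
      ∫ x, fderiv ℝ h x (Pi.single A 1) * ω A B * fderiv ℝ u x (Pi.single B 1) := by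
    rw [intR, show (fun x => pbr ω h u x) = pbr ω h u from rfl]
    unfold pbr
    rw [integral_finset_sum _ (fun A _ => integrable_finset_sum _ (fun B _ => hint A B))]
    exact Finset.sum_congr rfl fun A _ => integral_finset_sum _ (fun B _ => hint A B)
  set J : Fin n → Fin n → ℝ :=
    fun A B => ∫ x, fderiv ℝ (fderiv ℝ h) x (Pi.single A 1) (Pi.single B 1) * u x with hJ
  have hterm : ∀ A B : Fin n,
      (∫ x, fderiv ℝ h x (Pi.single A 1) * ω A B * fderiv ℝ u x (Pi.single B 1))
        = ω A B * (- J A B) := by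
    intro A B
    have e1 : (fun x => fderiv ℝ h x (Pi.single A 1) * ω A B * fderiv ℝ u x (Pi.single B 1))
        = fun x => ω A B * (fderiv ℝ h x (Pi.single A 1) * fderiv ℝ u x (Pi.single B 1)) := by
      funext x; ring
    rw [e1, integral_const_mul, ibp hh hu hcu]
    congr 1
    rw [← integral_neg, ← integral_neg]
    congr 1; funext x
    rw [fderiv_pd hh x (Pi.single A 1) (Pi.single B 1),
      snd_symm hh x (Pi.single B 1) (Pi.single A 1)]
  rw [hsplit]
  have hJsymm : ∀ A B, J A B = J B A := by
    intro A B
    simp only [hJ]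
    congr 1; funext x
    rw [snd_symm hh x (Pi.single A 1) (Pi.single B 1)]
  have hS : (∑ A : Fin n, ∑ B : Fin n, ω A B * J A B) = 0 := by
    have h2 : (∑ A : Fin n, ∑ B : Fin n, ω A B * J A B)
        = -∑ A : Fin n, ∑ B : Fin n, ω A B * J A B := by
      conv_lhs => rw [Finset.sum_comm]
      have e : ∀ B A : Fin n, ω A B * J A B = -(ω B A * J B A) := by
        intro B A; rw [hωswap A B, hJsymm B A]; ring
      calc (∑ B : Fin n, ∑ A : Fin n, ω A B * J A B)
          = ∑ B : Fin n, ∑ A : Fin n, -(ω B A * J B A) :=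
            Finset.sum_congr rfl fun B _ => Finset.sum_congr rfl fun A _ => e B A
        _ = -∑ B : Fin n, ∑ A : Fin n, ω B A * J B A := by
            simp [Finset.sum_neg_distrib]
    linarith
  calc (∑ A : Fin n, ∑ B : Fin n,
      ∫ x, fderiv ℝ h x (Pi.single A 1) * ω A B * fderiv ℝ u x (Pi.single B 1))
      = ∑ A : Fin n, ∑ B : Fin n, ω A B * (-J A B) :=
        Finset.sum_congr rfl fun A _ => Finset.sum_congr rfl fun B _ => hterm A B
    _ = -∑ A : Fin n, ∑ B : Fin n, ω A B * J A B := by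
        simp [mul_neg, Finset.sum_neg_distrib]
    _ = 0 := by rw [hS, neg_zero]

end MzetaAux

open MzetaAux

/-- with `T_ζ f = f + ζ·f̄`, one has
`{T_ζ f, T_ζ g} = T_ζ({f,g} - m_ζ(f,g))` for `f, g ∈ C_c^∞(ℝ^n)`. -/
theorem mzeta_similarity_transformation
    (n : ℕ) (hn : 0 < n) (ω : Matrix (Fin n) (Fin n) ℝ) (hω : ω.transpose = -ω)
    (ζ : (Fin n → ℝ) → ℝ) (hζ : ContDiff ℝ (⊤ : ℕ∞) ζ)
    (T : ((Fin n → ℝ) → ℝ) → ((Fin n → ℝ) → ℝ))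
    (hT : ∀ f : (Fin n → ℝ) → ℝ, T f = fun x => f x + ζ x * intR f)
    (f g : (Fin n → ℝ) → ℝ) (hf : IsCcSmooth f) (hg : IsCcSmooth g) :
    pbr ω (T f) (T g) = T (fun x => pbr ω f g x - mzeta ω ζ f g x) := by
  obtain ⟨hfs, hfc⟩ := hf
  obtain ⟨hgs, hgc⟩ := hg
  have hωswap : ∀ A B, ω B A = -ω A B := by
    intro A B
    have := congrFun (congrFun hω A) B
    simpa [Matrix.transpose_apply] using this
  have swap : ∀ a b : Fin n → ℝ,
      (∑ A : Fin n, ∑ B : Fin n, a A * ω A B * b B)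
        = -∑ A : Fin n, ∑ B : Fin n, b A * ω A B * a B := by
    intro a b
    conv_lhs => rw [Finset.sum_comm]
    calc (∑ B : Fin n, ∑ A : Fin n, a A * ω A B * b B)
        = ∑ B : Fin n, ∑ A : Fin n, -(b B * ω B A * a A) :=
          Finset.sum_congr rfl fun B _ => Finset.sum_congr rfl fun A _ => by
            rw [hωswap A B]; ring
      _ = -∑ B : Fin n, ∑ A : Fin n, b B * ω B A * a A := by
          simp [Finset.sum_neg_distrib]
  -- the integral of the transformed bracket vanishes
  have i1 : Integrable (pbr ω f g) volume := int_pbr ω hfs hgs hgc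
  have i2 : Integrable (pbr ω ζ f) volume := int_pbr ω hζ hfs hfc
  have i3 : Integrable (pbr ω ζ g) volume := int_pbr ω hζ hgs hgc
  have hz : intR (fun x => pbr ω f g x - mzeta ω ζ f g x) = 0 := by
    have e : intR (fun x => pbr ω f g x - mzeta ω ζ f g x)
        = intR (pbr ω f g)
          - (intR (pbr ω ζ f) * intR g - intR (pbr ω ζ g) * intR f) := by
      have i23 : Integrable (fun x => pbr ω ζ f x * intR g - pbr ω ζ g x * intR f)
          volume := (i2.mul_const _).sub (i3.mul_const _)
      have i2' : Integrable (fun x => pbr ω ζ f x * intR g) volume := i2.mul_const _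
      have i3' : Integrable (fun x => pbr ω ζ g x * intR f) volume := i3.mul_const _
      unfold intR mzeta
      rw [integral_sub i1 i23, integral_sub i2' i3',
        integral_mul_const, integral_mul_const]
      rfl
    rw [e, intR_pbr ω hω hfs hgs hgc, intR_pbr ω hω hζ hfs hfc,
      intR_pbr ω hω hζ hgs hgc]
    ring
  rw [hT f, hT g, hT]
  funext x
  simp only [hz, mul_zero, add_zero]
  have hder : ∀ (u : (Fin n → ℝ) → ℝ), ContDiff ℝ (⊤ : ℕ∞) u → ∀ (c : ℝ) (v : Fin n → ℝ),
      fderiv ℝ (fun y => u y + ζ y * c) x v = fderiv ℝ u x v + c * fderiv ℝ ζ x v := by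
    intro u hu c v
    have H : HasFDerivAt (fun y => u y + ζ y * c)
        (fderiv ℝ u x + c • fderiv ℝ ζ x) x :=
      ((hu.differentiable (by simp) x).hasFDerivAt).add
        (((hζ.differentiable (by simp) x).hasFDerivAt).mul_const c)
    rw [H.fderiv]
    simp [smul_eq_mul]
  set Df : Fin n → ℝ := fun A => fderiv ℝ f x (Pi.single A 1) with hDf
  set Dg : Fin n → ℝ := fun A => fderiv ℝ g x (Pi.single A 1) with hDg
  set Dz : Fin n → ℝ := fun A => fderiv ℝ ζ x (Pi.single A 1) with hDz
  have e1 : pbr ω (fun y => f y + ζ y * intR f) (fun y => g y + ζ y * intR g) x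
      = ∑ A : Fin n, ∑ B : Fin n,
        (Df A + intR f * Dz A) * ω A B * (Dg B + intR g * Dz B) := by
    unfold pbr
    exact Finset.sum_congr rfl fun A _ => Finset.sum_congr rfl fun B _ => by
      rw [hder f hfs (intR f) (Pi.single A 1), hder g hgs (intR g) (Pi.single B 1)]
  have e2 : (∑ A : Fin n, ∑ B : Fin n,
        (Df A + intR f * Dz A) * ω A B * (Dg B + intR g * Dz B))
      = (∑ A : Fin n, ∑ B : Fin n, Df A * ω A B * Dg B)
        + intR f * (∑ A : Fin n, ∑ B : Fin n, Dz A * ω A B * Dg B)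
        + intR g * (∑ A : Fin n, ∑ B : Fin n, Df A * ω A B * Dz B)
        + (intR f * intR g) * (∑ A : Fin n, ∑ B : Fin n, Dz A * ω A B * Dz B) := by
    simp only [Finset.mul_sum, ← Finset.sum_add_distrib]
    exact Finset.sum_congr rfl fun A _ => Finset.sum_congr rfl fun B _ => by ring
  have e3 : (∑ A : Fin n, ∑ B : Fin n, Dz A * ω A B * Dz B) = 0 := by
    have := swap Dz Dz; linarith
  have e4 : (∑ A : Fin n, ∑ B : Fin n, Df A * ω A B * Dz B)
      = -∑ A : Fin n, ∑ B : Fin n, Dz A * ω A B * Df B := swap Df Dz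
  have hpfg : pbr ω f g x = ∑ A : Fin n, ∑ B : Fin n, Df A * ω A B * Dg B := rfl
  have hpzf : pbr ω ζ f x = ∑ A : Fin n, ∑ B : Fin n, Dz A * ω A B * Df B := rfl
  have hpzg : pbr ω ζ g x = ∑ A : Fin n, ∑ B : Fin n, Dz A * ω A B * Dg B := rfl
  rw [e1, e2, e3, e4]
  unfold mzeta
  rw [hpfg, hpzf, hpzg]
  ring
end
end

section
/- For every smooth function ζ : ℝ^n → ℝ, the bracket C(f,g) = {f,g} + m_ζ(f,g) is a Lie bracket on D = C_c^∞(ℝ^n): it is bilinear, antisymmetric, maps D × D into D, and satisfies the Jacobi identity C(f, C(g,h)) + C(g, C(h,f)) + C(h, C(f,g)) = 0 for all f, g, h ∈ D. -/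
open MeasureTheory Finset

noncomputable section

abbrev EE (n : ℕ) := Fin n → ℝ

lemma pd_contDiff {n : ℕ} {f : EE n → ℝ} (hf : ContDiff ℝ (⊤ : ℕ∞) f) (v : EE n) :
    ContDiff ℝ (⊤ : ℕ∞) (fun x => fderiv ℝ f x v) :=
  (hf.fderiv_right (by simp)).clm_apply contDiff_const

section Helpers
variable {n : ℕ}

lemma pbr_contDiff (ω : Matrix (Fin n) (Fin n) ℝ) {f g : EE n → ℝ}
    (hf : ContDiff ℝ (⊤ : ℕ∞) f) (hg : ContDiff ℝ (⊤ : ℕ∞) g) : ContDiff ℝ (⊤ : ℕ∞) (pbr ω f g) := by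
  unfold pbr
  apply ContDiff.sum; intro A _
  apply ContDiff.sum; intro B _
  exact ((pd_contDiff hf _).mul contDiff_const).mul (pd_contDiff hg _)

lemma pbr_hcs (ω : Matrix (Fin n) (Fin n) ℝ) (f : EE n → ℝ) {g : EE n → ℝ}
    (hg : HasCompactSupport g) : HasCompactSupport (pbr ω f g) := by
  apply (hg.fderiv (𝕜 := ℝ)).mono'
  intro x hx
  apply subset_tsupport
  simp only [Function.mem_support] at hx ⊢
  intro h
  apply hx
  simp [pbr, h]

lemma IsCcSmooth.integrable {f : EE n → ℝ} (hf : IsCcSmooth f) : Integrable f :=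
  (hf.1.continuous).integrable_of_hasCompactSupport hf.2

lemma mul_cc_integrable {φ ψ : EE n → ℝ} (hφ : Continuous φ) (hψc : Continuous ψ)
    (hψ : HasCompactSupport ψ) : Integrable (fun x => φ x * ψ x) := by
  apply (hφ.mul hψc).integrable_of_hasCompactSupport
  apply hψ.mono'
  intro x hx
  apply subset_tsupport
  simp only [Function.mem_support] at hx ⊢
  intro h; apply hx; simp [h]

lemma sum_antisymm_symm {ω : Matrix (Fin n) (Fin n) ℝ} (hω : ω.transpose = -ω)
    (d : Fin n → Fin n → ℝ) (hd : ∀ A B, d A B = d B A) :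
    ∑ A : Fin n, ∑ B : Fin n, ω A B * d A B = 0 := by
  have key : ∀ A B : Fin n, ω B A * d B A = -(ω A B * d A B) := by
    intro A B
    have h1 : ω B A = -ω A B := by
      have := congrFun (congrFun hω A) B
      simpa [Matrix.transpose_apply, Matrix.neg_apply] using this
    rw [h1, hd B A]; ring
  have h2 : (∑ A : Fin n, ∑ B : Fin n, ω A B * d A B)
      = ∑ A : Fin n, ∑ B : Fin n, -(ω A B * d A B) := by
    rw [Finset.sum_comm]
    exact Finset.sum_congr rfl fun A _ => Finset.sum_congr rfl fun B _ => key A B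
  simp only [Finset.sum_neg_distrib] at h2
  linarith

lemma hess_symm {f : EE n → ℝ} (hf : ContDiff ℝ (⊤ : ℕ∞) f) (x v w : EE n) :
    fderiv ℝ (fderiv ℝ f) x v w = fderiv ℝ (fderiv ℝ f) x w v :=
  (hf.contDiffAt.isSymmSndFDerivAt (by rw [minSmoothness_of_isRCLikeNormedField]; exact WithTop.coe_le_coe.2 le_top)).eq v w

/-- derivative of a directional derivative -/
lemma pd_pd {f : EE n → ℝ} (hf : ContDiff ℝ (⊤ : ℕ∞) f) (x v w : EE n) :
    fderiv ℝ (fun y => fderiv ℝ f y w) x v = fderiv ℝ (fderiv ℝ f) x v w := by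
  rw [fderiv_clm_apply (((hf.fderiv_right (m := (⊤ : ℕ∞)) (by simp)).differentiable (by simp)) x)
    (differentiableAt_const w)]
  simp

lemma intR_pbr_zero {ω : Matrix (Fin n) (Fin n) ℝ} (hω : ω.transpose = -ω)
    {u v : EE n → ℝ} (hu : ContDiff ℝ (⊤ : ℕ∞) u) (hv : IsCcSmooth v) :
    intR (pbr ω u v) = 0 := by
  have hud : Differentiable ℝ u := hu.differentiable (by simp)
  have hvd : Differentiable ℝ v := hv.1.differentiable (by simp)
  have hint : ∀ (A B : Fin n), Integrable (fun x =>
      fderiv ℝ u x (Pi.single A 1) * ω A B * fderiv ℝ v x (Pi.single B 1)) := by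
    intro A B
    have := mul_cc_integrable (φ := fun x => fderiv ℝ u x (Pi.single A 1) * ω A B)
      (ψ := fun x => fderiv ℝ v x (Pi.single B 1))
      (((pd_contDiff hu _).continuous).mul continuous_const)
      ((pd_contDiff hv.1 _).continuous)
      (by
        apply (hv.2.fderiv (𝕜 := ℝ)).mono'
        intro x hx
        apply subset_tsupport
        simp only [Function.mem_support] at hx ⊢
        intro h; apply hx; rw [h]; simp)
    exact this
  -- integration by parts on each term
  have ibp : ∀ (A B : Fin n),
      (∫ x, fderiv ℝ u x (Pi.single A 1) * fderiv ℝ v x (Pi.single B 1))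
        = -∫ x, fderiv ℝ (fderiv ℝ u) x (Pi.single B 1) (Pi.single A 1) * v x := by
    intro A B
    have h := integral_mul_fderiv_eq_neg_fderiv_mul_of_integrable (μ := volume)
      (f := fun x => fderiv ℝ u x (Pi.single A 1)) (g := v) (v := Pi.single B 1)
      (by
        refine mul_cc_integrable ?_ hv.1.continuous hv.2
        exact ((pd_contDiff (pd_contDiff hu (Pi.single A 1)) (Pi.single B 1))).continuous)
      (by
        refine mul_cc_integrable ((pd_contDiff hu _).continuous)
          ((pd_contDiff hv.1 _).continuous) ?_
        apply (hv.2.fderiv (𝕜 := ℝ)).mono'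
        intro x hx
        apply subset_tsupport
        simp only [Function.mem_support] at hx ⊢
        intro h; apply hx; rw [h]; simp)
      (mul_cc_integrable ((pd_contDiff hu _).continuous) hv.1.continuous hv.2)
      (fun x _ => (pd_contDiff hu _).differentiable (by simp) x) (fun x _ => hvd x)
    rw [h]
    congr 1
    apply integral_congr_ae
    filter_upwards with x
    rw [pd_pd hu x (Pi.single B 1) (Pi.single A 1)]
  have expand : intR (pbr ω u v)
      = ∑ A : Fin n, ∑ B : Fin n, ω A B *
          ∫ x, fderiv ℝ u x (Pi.single A 1) * fderiv ℝ v x (Pi.single B 1) := by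
    rw [intR]
    rw [show (fun x => pbr ω u v x) = pbr ω u v from rfl]
    unfold pbr
    rw [integral_finset_sum _ (fun A _ => integrable_finset_sum _ (fun B _ => hint A B))]
    refine Finset.sum_congr rfl fun A _ => ?_
    rw [integral_finset_sum _ (fun B _ => hint A B)]
    refine Finset.sum_congr rfl fun B _ => ?_
    rw [← integral_const_mul]
    apply integral_congr_ae
    filter_upwards with x
    ring
  rw [expand]
  have : ∀ A B : Fin n, ω A B * (∫ x, fderiv ℝ u x (Pi.single A 1) *
      fderiv ℝ v x (Pi.single B 1)) = ω A B *
      (-∫ x, fderiv ℝ (fderiv ℝ u) x (Pi.single B 1) (Pi.single A 1) * v x) := by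
    intro A B; rw [ibp A B]
  rw [Finset.sum_congr rfl fun A _ => Finset.sum_congr rfl fun B _ => this A B]
  apply sum_antisymm_symm hω
  intro A B
  congr 1
  apply integral_congr_ae
  filter_upwards with x
  rw [hess_symm hu]

lemma fderiv_pbr_apply (ω : Matrix (Fin n) (Fin n) ℝ) {g h : EE n → ℝ}
    (hg : ContDiff ℝ (⊤ : ℕ∞) g) (hh : ContDiff ℝ (⊤ : ℕ∞) h) (x v : EE n) :
    fderiv ℝ (pbr ω g h) x v = ∑ A : Fin n, ∑ B : Fin n,
      (fderiv ℝ (fderiv ℝ g) x v (Pi.single A 1) * ω A B * fderiv ℝ h x (Pi.single B 1)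
        + fderiv ℝ g x (Pi.single A 1) * ω A B * fderiv ℝ (fderiv ℝ h) x v (Pi.single B 1)) := by
  have hterm : ∀ A B : Fin n, DifferentiableAt ℝ (fun y =>
      fderiv ℝ g y (Pi.single A 1) * ω A B * fderiv ℝ h y (Pi.single B 1)) x := by
    intro A B
    exact (((pd_contDiff hg _).differentiable (by simp) x).mul_const _).mul
      ((pd_contDiff hh _).differentiable (by simp) x)
  unfold pbr
  rw [fderiv_fun_sum (fun A _ => DifferentiableAt.fun_sum (fun B _ => hterm A B))]
  rw [ContinuousLinearMap.sum_apply]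
  refine Finset.sum_congr rfl fun A _ => ?_
  rw [fderiv_fun_sum (fun B _ => hterm A B), ContinuousLinearMap.sum_apply]
  refine Finset.sum_congr rfl fun B _ => ?_
  rw [fderiv_fun_mul (((pd_contDiff hg _).differentiable (by simp) x).mul_const _)
    ((pd_contDiff hh _).differentiable (by simp) x)]
  rw [ContinuousLinearMap.add_apply, ContinuousLinearMap.smul_apply,
    ContinuousLinearMap.smul_apply]
  rw [fderiv_mul_const ((pd_contDiff hg _).differentiable (by simp) x)]
  rw [ContinuousLinearMap.smul_apply]
  rw [pd_pd hg, pd_pd hh]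
  simp only [smul_eq_mul]
  ring

def S1 {n : ℕ} (ω : Matrix (Fin n) (Fin n) ℝ) (φ ψ χ : EE n → ℝ) (x : EE n) : ℝ :=
  ∑ C : Fin n, ∑ D : Fin n, ∑ A : Fin n, ∑ B : Fin n,
    fderiv ℝ φ x (Pi.single C 1) * ω C D *
      (fderiv ℝ (fderiv ℝ ψ) x (Pi.single D 1) (Pi.single A 1) * ω A B *
        fderiv ℝ χ x (Pi.single B 1))

def S2 {n : ℕ} (ω : Matrix (Fin n) (Fin n) ℝ) (φ ψ χ : EE n → ℝ) (x : EE n) : ℝ :=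
  ∑ C : Fin n, ∑ D : Fin n, ∑ A : Fin n, ∑ B : Fin n,
    fderiv ℝ φ x (Pi.single C 1) * ω C D *
      (fderiv ℝ ψ x (Pi.single A 1) * ω A B *
        fderiv ℝ (fderiv ℝ χ) x (Pi.single D 1) (Pi.single B 1))

lemma pbr_pbr_eq (ω : Matrix (Fin n) (Fin n) ℝ) (φ : EE n → ℝ) {ψ χ : EE n → ℝ}
    (hψ : ContDiff ℝ (⊤ : ℕ∞) ψ) (hχ : ContDiff ℝ (⊤ : ℕ∞) χ) (x : EE n) :
    pbr ω φ (pbr ω ψ χ) x = S1 ω φ ψ χ x + S2 ω φ ψ χ x := by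
  show (∑ C : Fin n, ∑ D : Fin n, fderiv ℝ φ x (Pi.single C 1) * ω C D *
      fderiv ℝ (pbr ω ψ χ) x (Pi.single D 1)) = _
  simp only [fderiv_pbr_apply ω hψ hχ x]
  unfold S1 S2
  rw [← Finset.sum_add_distrib]
  refine Finset.sum_congr rfl fun C _ => ?_
  rw [← Finset.sum_add_distrib]
  refine Finset.sum_congr rfl fun D _ => ?_
  rw [Finset.mul_sum, ← Finset.sum_add_distrib]
  refine Finset.sum_congr rfl fun A _ => ?_
  rw [Finset.mul_sum, ← Finset.sum_add_distrib]
  refine Finset.sum_congr rfl fun B _ => ?_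
  ring

lemma sum4_perm (F : Fin n → Fin n → Fin n → Fin n → ℝ) :
    (∑ C : Fin n, ∑ D : Fin n, ∑ A : Fin n, ∑ B : Fin n, F C D A B)
      = ∑ C : Fin n, ∑ D : Fin n, ∑ A : Fin n, ∑ B : Fin n, F A B D C := by
  have key : ∀ (G : Fin n → Fin n → Fin n → Fin n → ℝ),
      (∑ C : Fin n, ∑ D : Fin n, ∑ A : Fin n, ∑ B : Fin n, G C D A B)
        = ∑ p : Fin n × Fin n × Fin n × Fin n, G p.1 p.2.1 p.2.2.1 p.2.2.2 := by
    intro G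
    rw [Fintype.sum_prod_type]
    refine Finset.sum_congr rfl fun C _ => ?_
    rw [Fintype.sum_prod_type]
    refine Finset.sum_congr rfl fun D _ => ?_
    rw [Fintype.sum_prod_type]
  rw [key, key (fun C D A B => F A B D C)]
  exact Fintype.sum_equiv
    ⟨fun p => (p.2.2.2, p.2.2.1, p.1, p.2.1), fun p => (p.2.2.1, p.2.2.2, p.2.1, p.1),
      fun ⟨a, b, c, d⟩ => rfl, fun ⟨a, b, c, d⟩ => rfl⟩
    _ _ (fun ⟨a, b, c, d⟩ => rfl)

lemma S2_eq_neg_S1 {ω : Matrix (Fin n) (Fin n) ℝ} (hω : ω.transpose = -ω)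
    (φ ψ : EE n → ℝ) {χ : EE n → ℝ} (hχ : ContDiff ℝ (⊤ : ℕ∞) χ) (x : EE n) :
    S2 ω φ ψ χ x = - S1 ω ψ χ φ x := by
  unfold S1 S2
  simp only [← Finset.sum_neg_distrib]
  conv_rhs => rw [sum4_perm (fun C D A B =>
    -(fderiv ℝ ψ x (Pi.single C 1) * ω C D *
      (fderiv ℝ (fderiv ℝ χ) x (Pi.single D 1) (Pi.single A 1) * ω A B *
        fderiv ℝ φ x (Pi.single B 1))))]
  refine Finset.sum_congr rfl fun C _ => ?_
  refine Finset.sum_congr rfl fun D _ => ?_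
  refine Finset.sum_congr rfl fun A _ => ?_
  refine Finset.sum_congr rfl fun B _ => ?_
  have h1 : ω D C = -ω C D := by
    have := congrFun (congrFun hω C) D
    simpa [Matrix.transpose_apply, Matrix.neg_apply] using this
  rw [hess_symm hχ x (Pi.single B 1) (Pi.single D 1), h1]
  ring

lemma jacobi_pbr {ω : Matrix (Fin n) (Fin n) ℝ} (hω : ω.transpose = -ω)
    {f g h : EE n → ℝ} (hf : ContDiff ℝ (⊤ : ℕ∞) f) (hg : ContDiff ℝ (⊤ : ℕ∞) g)
    (hh : ContDiff ℝ (⊤ : ℕ∞) h) (x : EE n) :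
    pbr ω f (pbr ω g h) x + pbr ω g (pbr ω h f) x + pbr ω h (pbr ω f g) x = 0 := by
  rw [pbr_pbr_eq ω f hg hh x, pbr_pbr_eq ω g hh hf x, pbr_pbr_eq ω h hf hg x,
    S2_eq_neg_S1 hω f g hh x, S2_eq_neg_S1 hω g h hf x, S2_eq_neg_S1 hω h f hg x]
  ring

-- pointwise antisymmetry of pbr
lemma pbr_antisym {ω : Matrix (Fin n) (Fin n) ℝ} (hω : ω.transpose = -ω)
    (f g : EE n → ℝ) (x : EE n) : pbr ω f g x = -pbr ω g f x := by
  unfold pbr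
  rw [Finset.sum_comm]
  simp only [← Finset.sum_neg_distrib]
  refine Finset.sum_congr rfl fun A _ => Finset.sum_congr rfl fun B _ => ?_
  have h1 : ω B A = -ω A B := by
    have := congrFun (congrFun hω A) B
    simpa [Matrix.transpose_apply, Matrix.neg_apply] using this
  rw [h1]; ring

lemma pbr_neg_right (ω : Matrix (Fin n) (Fin n) ℝ) (φ F : EE n → ℝ) (x : EE n) :
    pbr ω φ (fun y => -F y) x = -pbr ω φ F x := by
  unfold pbr
  simp only [fderiv_fun_neg, ContinuousLinearMap.neg_apply, mul_neg, Finset.sum_neg_distrib]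

-- linear-combination in the left argument
lemma pbr_left_lin (ω : Matrix (Fin n) (Fin n) ℝ) (a b : ℝ) {f g : EE n → ℝ}
    (h : EE n → ℝ) (hf : Differentiable ℝ f) (hg : Differentiable ℝ g) (x : EE n) :
    pbr ω (fun y => a * f y + b * g y) h x = a * pbr ω f h x + b * pbr ω g h x := by
  unfold pbr
  have hd : ∀ A : Fin n, fderiv ℝ (fun y => a * f y + b * g y) x (Pi.single A 1)
      = a * fderiv ℝ f x (Pi.single A 1) + b * fderiv ℝ g x (Pi.single A 1) := by
    intro A
    rw [fderiv_fun_add ((hf x).const_mul a) ((hg x).const_mul b),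
      fderiv_const_mul (hf x) a, fderiv_const_mul (hg x) b]
    simp
  simp only [hd, Finset.mul_sum, ← Finset.sum_add_distrib]
  refine Finset.sum_congr rfl fun A _ => Finset.sum_congr rfl fun B _ => ?_
  ring

lemma pbr_right_lin (ω : Matrix (Fin n) (Fin n) ℝ) (a b : ℝ) (f : EE n → ℝ)
    {g h : EE n → ℝ} (hg : Differentiable ℝ g) (hh : Differentiable ℝ h) (x : EE n) :
    pbr ω f (fun y => a * g y + b * h y) x = a * pbr ω f g x + b * pbr ω f h x := by
  unfold pbr
  have hd : ∀ B : Fin n, fderiv ℝ (fun y => a * g y + b * h y) x (Pi.single B 1)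
      = a * fderiv ℝ g x (Pi.single B 1) + b * fderiv ℝ h x (Pi.single B 1) := by
    intro B
    rw [fderiv_fun_add ((hg x).const_mul a) ((hh x).const_mul b),
      fderiv_const_mul (hg x) a, fderiv_const_mul (hh x) b]
    simp
  simp only [hd, Finset.mul_sum, ← Finset.sum_add_distrib]
  refine Finset.sum_congr rfl fun A _ => Finset.sum_congr rfl fun B _ => ?_
  ring

-- combination appearing in the bracket: P + (Q·β - R·γ)
lemma pbr_right_comb (ω : Matrix (Fin n) (Fin n) ℝ) (φ : EE n → ℝ) {P Q R : EE n → ℝ}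
    (hP : Differentiable ℝ P) (hQ : Differentiable ℝ Q) (hR : Differentiable ℝ R)
    (β γ : ℝ) (x : EE n) :
    pbr ω φ (fun y => P y + (Q y * β - R y * γ)) x
      = pbr ω φ P x + (β * pbr ω φ Q x - γ * pbr ω φ R x) := by
  unfold pbr
  have hd : ∀ B : Fin n, fderiv ℝ (fun y => P y + (Q y * β - R y * γ)) x (Pi.single B 1)
      = fderiv ℝ P x (Pi.single B 1)
        + (β * fderiv ℝ Q x (Pi.single B 1) - γ * fderiv ℝ R x (Pi.single B 1)) := by
    intro B
    rw [fderiv_fun_add (hP x) (((hQ x).mul_const β).fun_sub ((hR x).mul_const γ)),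
      fderiv_fun_sub ((hQ x).mul_const β) ((hR x).mul_const γ),
      fderiv_mul_const (hQ x) β, fderiv_mul_const (hR x) γ]
    simp only [ContinuousLinearMap.add_apply, ContinuousLinearMap.sub_apply,
      ContinuousLinearMap.smul_apply, smul_eq_mul]
  simp only [hd, Finset.mul_sum, ← Finset.sum_add_distrib, ← Finset.sum_sub_distrib]
  refine Finset.sum_congr rfl fun A _ => Finset.sum_congr rfl fun B _ => ?_
  ring

lemma intR_comb {P Q R : EE n → ℝ} (hP : Integrable P) (hQ : Integrable Q)
    (hR : Integrable R) (β γ : ℝ) :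
    intR (fun y => P y + (Q y * β - R y * γ))
      = intR P + (intR Q * β - intR R * γ) := by
  unfold intR
  rw [integral_add (g := fun y => Q y * β - R y * γ) hP
      ((hQ.mul_const β).sub (hR.mul_const γ)),
    integral_sub (f := fun y => Q y * β) (g := fun y => R y * γ)
      (hQ.mul_const β) (hR.mul_const γ),
    integral_mul_const β, integral_mul_const γ]

lemma intR_lin (a b : ℝ) {f g : EE n → ℝ} (hf : Integrable f) (hg : Integrable g) :
    intR (fun y => a * f y + b * g y) = a * intR f + b * intR g := by
  unfold intR
  rw [integral_add (hf.const_mul a) (hg.const_mul b), integral_const_mul a, integral_const_mul b]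

end Helpers

/-- `C(f,g) = {f,g} + m_ζ(f,g)` is a Lie bracket on `C_c^∞(ℝ^n)`. -/
theorem pbr_plus_mzeta_is_lie_bracket
    (n : ℕ) (hn : 0 < n) (ω : Matrix (Fin n) (Fin n) ℝ) (hω : ω.transpose = -ω)
    (ζ : (Fin n → ℝ) → ℝ) (hζ : ContDiff ℝ (⊤ : ℕ∞) ζ) :
    (∀ (a b : ℝ) (f g h : (Fin n → ℝ) → ℝ), IsCcSmooth f → IsCcSmooth g → IsCcSmooth h →
        (fun x => pbr ω (fun y => a * f y + b * g y) h x
            + mzeta ω ζ (fun y => a * f y + b * g y) h x)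
          = fun x => a * (pbr ω f h x + mzeta ω ζ f h x)
              + b * (pbr ω g h x + mzeta ω ζ g h x)) ∧
    (∀ (a b : ℝ) (f g h : (Fin n → ℝ) → ℝ), IsCcSmooth f → IsCcSmooth g → IsCcSmooth h →
        (fun x => pbr ω f (fun y => a * g y + b * h y) x
            + mzeta ω ζ f (fun y => a * g y + b * h y) x)
          = fun x => a * (pbr ω f g x + mzeta ω ζ f g x)
              + b * (pbr ω f h x + mzeta ω ζ f h x)) ∧
    (∀ f g : (Fin n → ℝ) → ℝ, IsCcSmooth f → IsCcSmooth g →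
        IsCcSmooth (fun x => pbr ω f g x + mzeta ω ζ f g x)) ∧
    (∀ f g : (Fin n → ℝ) → ℝ, IsCcSmooth f → IsCcSmooth g →
        (fun x => pbr ω f g x + mzeta ω ζ f g x)
          = fun x => -(pbr ω g f x + mzeta ω ζ g f x)) ∧
    (∀ f g h : (Fin n → ℝ) → ℝ, IsCcSmooth f → IsCcSmooth g → IsCcSmooth h →
        ∀ x,
          (pbr ω f (fun y => pbr ω g h y + mzeta ω ζ g h y) x
              + mzeta ω ζ f (fun y => pbr ω g h y + mzeta ω ζ g h y) x)
          + (pbr ω g (fun y => pbr ω h f y + mzeta ω ζ h f y) x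
              + mzeta ω ζ g (fun y => pbr ω h f y + mzeta ω ζ h f y) x)
          + (pbr ω h (fun y => pbr ω f g y + mzeta ω ζ f g y) x
              + mzeta ω ζ h (fun y => pbr ω f g y + mzeta ω ζ f g y) x) = 0) := by
  refine ⟨?_, ?_, ?_, ?_, ?_⟩
  · -- linearity in the first argument
    intro a b f g h hf hg hh
    funext x
    simp only [mzeta]
    rw [pbr_left_lin ω a b h (hf.1.differentiable (by simp)) (hg.1.differentiable (by simp)) x,
      pbr_right_lin ω a b ζ (hf.1.differentiable (by simp)) (hg.1.differentiable (by simp)) x,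
      intR_lin a b hf.integrable hg.integrable]
    ring
  · -- linearity in the second argument
    intro a b f g h hf hg hh
    funext x
    simp only [mzeta]
    rw [pbr_right_lin ω a b f (hg.1.differentiable (by simp)) (hh.1.differentiable (by simp)) x,
      pbr_right_lin ω a b ζ (hg.1.differentiable (by simp)) (hh.1.differentiable (by simp)) x,
      intR_lin a b hg.integrable hh.integrable]
    ring
  · -- closure
    intro f g hf hg
    constructor
    · exact (pbr_contDiff ω hf.1 hg.1).add
        (((pbr_contDiff ω hζ hf.1).mul contDiff_const).sub
          ((pbr_contDiff ω hζ hg.1).mul contDiff_const))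
    · have h1 : HasCompactSupport (pbr ω f g) := pbr_hcs ω f hg.2
      have h2 : HasCompactSupport (fun x => pbr ω ζ f x * intR g) :=
        (pbr_hcs ω ζ hf.2).mul_right
      have h3 : HasCompactSupport (fun x => pbr ω ζ g x * intR f) :=
        (pbr_hcs ω ζ hg.2).mul_right
      have h23 : HasCompactSupport
          (fun x => pbr ω ζ f x * intR g - pbr ω ζ g x * intR f) :=
        HasCompactSupport.comp₂_left h2 h3 (sub_zero 0)
      exact HasCompactSupport.comp₂_left h1 h23 (add_zero 0)
  · -- antisymmetry
    intro f g hf hg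
    funext x
    simp only [mzeta]
    rw [pbr_antisym hω f g x]
    ring
  · -- Jacobi identity
    intro f g h hf hg hh x
    have hfd := hf.1
    have hgd := hg.1
    have hhd := hh.1
    have dgh : Differentiable ℝ (pbr ω g h) := (pbr_contDiff ω hgd hhd).differentiable (by simp)
    have dhf : Differentiable ℝ (pbr ω h f) := (pbr_contDiff ω hhd hfd).differentiable (by simp)
    have dfg : Differentiable ℝ (pbr ω f g) := (pbr_contDiff ω hfd hgd).differentiable (by simp)
    have dzf : Differentiable ℝ (pbr ω ζ f) := (pbr_contDiff ω hζ hfd).differentiable (by simp)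
    have dzg : Differentiable ℝ (pbr ω ζ g) := (pbr_contDiff ω hζ hgd).differentiable (by simp)
    have dzh : Differentiable ℝ (pbr ω ζ h) := (pbr_contDiff ω hζ hhd).differentiable (by simp)
    have igh : Integrable (pbr ω g h) :=
      (pbr_contDiff ω hgd hhd).continuous.integrable_of_hasCompactSupport (pbr_hcs ω g hh.2)
    have ihf : Integrable (pbr ω h f) :=
      (pbr_contDiff ω hhd hfd).continuous.integrable_of_hasCompactSupport (pbr_hcs ω h hf.2)
    have ifg : Integrable (pbr ω f g) :=
      (pbr_contDiff ω hfd hgd).continuous.integrable_of_hasCompactSupport (pbr_hcs ω f hg.2)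
    have izf : Integrable (pbr ω ζ f) :=
      (pbr_contDiff ω hζ hfd).continuous.integrable_of_hasCompactSupport (pbr_hcs ω ζ hf.2)
    have izg : Integrable (pbr ω ζ g) :=
      (pbr_contDiff ω hζ hgd).continuous.integrable_of_hasCompactSupport (pbr_hcs ω ζ hg.2)
    have izh : Integrable (pbr ω ζ h) :=
      (pbr_contDiff ω hζ hhd).continuous.integrable_of_hasCompactSupport (pbr_hcs ω ζ hh.2)
    simp only [mzeta]
    rw [pbr_right_comb ω f dgh dzg dzh (intR h) (intR g) x,
      pbr_right_comb ω ζ dgh dzg dzh (intR h) (intR g) x,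
      pbr_right_comb ω g dhf dzh dzf (intR f) (intR h) x,
      pbr_right_comb ω ζ dhf dzh dzf (intR f) (intR h) x,
      pbr_right_comb ω h dfg dzf dzg (intR g) (intR f) x,
      pbr_right_comb ω ζ dfg dzf dzg (intR g) (intR f) x]
    have i1 : intR (fun y => pbr ω g h y + (pbr ω ζ g y * intR h - pbr ω ζ h y * intR g)) = 0 := by
      rw [intR_comb igh izg izh, intR_pbr_zero hω hgd ⟨hhd, hh.2⟩,
        intR_pbr_zero hω hζ ⟨hgd, hg.2⟩, intR_pbr_zero hω hζ ⟨hhd, hh.2⟩]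
      ring
    have i2 : intR (fun y => pbr ω h f y + (pbr ω ζ h y * intR f - pbr ω ζ f y * intR h)) = 0 := by
      rw [intR_comb ihf izh izf, intR_pbr_zero hω hhd ⟨hfd, hf.2⟩,
        intR_pbr_zero hω hζ ⟨hhd, hh.2⟩, intR_pbr_zero hω hζ ⟨hfd, hf.2⟩]
      ring
    have i3 : intR (fun y => pbr ω f g y + (pbr ω ζ f y * intR g - pbr ω ζ g y * intR f)) = 0 := by
      rw [intR_comb ifg izf izg, intR_pbr_zero hω hfd ⟨hgd, hg.2⟩,
        intR_pbr_zero hω hζ ⟨hfd, hf.2⟩, intR_pbr_zero hω hζ ⟨hgd, hg.2⟩]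
      ring
    rw [i1, i2, i3]
    have J1 := jacobi_pbr hω hfd hgd hhd x
    have J2 := jacobi_pbr hω hζ hgd hhd x
    have J3 := jacobi_pbr hω hζ hhd hfd x
    have J4 := jacobi_pbr hω hζ hfd hgd x
    have N1 : pbr ω g (pbr ω h ζ) x + pbr ω g (pbr ω ζ h) x = 0 := by
      rw [show pbr ω h ζ = fun y => -pbr ω ζ h y from funext fun y => pbr_antisym hω h ζ y,
        pbr_neg_right]
      ring
    have N2 : pbr ω h (pbr ω f ζ) x + pbr ω h (pbr ω ζ f) x = 0 := by
      rw [show pbr ω f ζ = fun y => -pbr ω ζ f y from funext fun y => pbr_antisym hω f ζ y,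
        pbr_neg_right]
      ring
    have N3 : pbr ω f (pbr ω g ζ) x + pbr ω f (pbr ω ζ g) x = 0 := by
      rw [show pbr ω g ζ = fun y => -pbr ω ζ g y from funext fun y => pbr_antisym hω g ζ y,
        pbr_neg_right]
      ring
    linear_combination J1 - intR f * J2 - intR g * J3 - intR h * J4
      + intR f * N1 + intR g * N2 + intR h * N3
end
end
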